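/- arXiv:1812.02952 — 13 statements merged into one kernel-verified Lean document; each statement's English description precedes it below -/
import Mathlib

section
/- Let f : [0,1] → [0,1] be continuous and consider the discrete-time dynamics π_{t+1} = f(π_t). The dynamics is equalizing — i.e., for all a, b ∈ [0,1], |f^t(a) − f^t(b)| → 0 as t → ∞ (where f^t denotes the t-th iterate) — if and only if f has a unique globally attracting equilibrium point, i.e., there exists π* ∈ [0,1] with f(π*) = π* and f^t(x) → π* as t → ∞ for every x ∈ [0,1]. -/
/-!
By the intermediate value theorem `f` has a fixed point `p` in `[0,1]`. Equalizing dynamics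
drive every orbit towards the constant orbit of `p`, which is therefore globally attracting,
and no other point can be the limit of that constant orbit. Conversely, orbits with a common
limit approach each other.
-/

open Filter Topology Function

theorem tendsto_iterate_of_tendsto_norm_sub_iterate {E : Type*} [SeminormedAddCommGroup E]
    {f : E → E} {p x : E} (hp : IsFixedPt f p)
    (h : Tendsto (fun t => ‖f^[t] x - f^[t] p‖) atTop (𝓝 0)) :
    Tendsto (fun t => f^[t] x) atTop (𝓝 p) := by
  rw [tendsto_iff_norm_sub_tendsto_zero]
  simpa only [(hp.iterate _).eq] using h

theorem Function.IsFixedPt.eq_of_tendsto_iterate {X : Type*} [TopologicalSpace X] [T2Space X]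
    {f : X → X} {p q : X} (hp : IsFixedPt f p) (h : Tendsto (fun t => f^[t] p) atTop (𝓝 q)) :
    p = q := by
  simp only [(hp.iterate _).eq] at h
  exact tendsto_const_nhds_iff.mp h

/-- For a continuous self-map `f` of `[0,1]`, the discrete-time dynamics
`π_{t+1} = f(π_t)` is equalizing (any two trajectories approach each other) if and only if
`f` has a unique globally attracting equilibrium point. -/
theorem equalizing_iff_unique_globally_attracting_equilibrium
    (f : ℝ → ℝ)
    (hc : ContinuousOn f (Set.Icc 0 1))
    (hmap : Set.MapsTo f (Set.Icc 0 1) (Set.Icc 0 1)) :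
    (∀ a ∈ Set.Icc (0:ℝ) 1, ∀ b ∈ Set.Icc (0:ℝ) 1,
        Filter.Tendsto (fun t => |f^[t] a - f^[t] b|) Filter.atTop (nhds 0))
      ↔
    (∃! p : ℝ, p ∈ Set.Icc (0:ℝ) 1 ∧ f p = p ∧
        ∀ x ∈ Set.Icc (0:ℝ) 1,
          Filter.Tendsto (fun t => f^[t] x) Filter.atTop (nhds p)) := by
  simp only [← Real.norm_eq_abs]
  constructor
  · intro h
    obtain ⟨p, hp, hfix⟩ := exists_mem_Icc_isFixedPt_of_mapsTo hc zero_le_one hmap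
    refine ⟨p, ⟨hp, hfix, fun x hx =>
      tendsto_iterate_of_tendsto_norm_sub_iterate hfix (h x hx p hp)⟩,
      fun q ⟨_, _, hq⟩ => (hfix.eq_of_tendsto_iterate (hq p hp)).symm⟩
  · rintro ⟨p, ⟨-, -, hconv⟩, -⟩ a ha b hb
    simpa using ((hconv a ha).sub (hconv b hb)).norm
end

section
/- Suppose f₁ and f₀ are ℓ1-Lipschitz with constants L₁ and L₀, and suppose L_UN := sup over all 0 ≤ π′ ≤ π ≤ 1 of [π·L₁ + (1−π)·L₀ + |f₁(0,π′) − f₀(0,π′)|] satisfies L_UN < 1. Then the UN one-step map f is a contraction on [0,1] with constant L_UN: |f(x) − f(y)| ≤ L_UN·|x − y| for all x, y ∈ [0,1]. -/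
/-! Write `f(x) − f(y)` for `y ≤ x` as
`x (g₁ x − g₁ y) + (1 − x)(g₀ x − g₀ y) + (x − y)(g₁ y − g₀ y)` with `gᵢ = fᵢ 0`:
the first two terms are controlled by the Lipschitz constants of the sections `fᵢ 0`, the last
one by the gap `|f₁(0,y) − f₀(0,y)|`, and together they are bounded by the summand of `L_UN`
at `(π', π) = (y, x)`. -/

theorem abs_mixture_sub_le_of_le (g₀ g₁ : ℝ → ℝ) {L₀ L₁ x y : ℝ}
    (hx₀ : 0 ≤ x) (hx₁ : x ≤ 1) (hyx : y ≤ x)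
    (h₀ : |g₀ x - g₀ y| ≤ L₀ * (x - y)) (h₁ : |g₁ x - g₁ y| ≤ L₁ * (x - y)) :
    |(x * g₁ x + (1 - x) * g₀ x) - (y * g₁ y + (1 - y) * g₀ y)|
      ≤ (x * L₁ + (1 - x) * L₀ + |g₁ y - g₀ y|) * (x - y) := by
  have hxy : 0 ≤ x - y := sub_nonneg.2 hyx
  calc |(x * g₁ x + (1 - x) * g₀ x) - (y * g₁ y + (1 - y) * g₀ y)|
      = |x * (g₁ x - g₁ y) + (1 - x) * (g₀ x - g₀ y) + (x - y) * (g₁ y - g₀ y)| := by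
        congr 1; ring
    _ ≤ |x * (g₁ x - g₁ y)| + |(1 - x) * (g₀ x - g₀ y)| + |(x - y) * (g₁ y - g₀ y)| :=
        abs_add_three _ _ _
    _ = x * |g₁ x - g₁ y| + (1 - x) * |g₀ x - g₀ y| + (x - y) * |g₁ y - g₀ y| := by
        rw [abs_mul, abs_mul, abs_mul, abs_of_nonneg hx₀, abs_of_nonneg (sub_nonneg.2 hx₁),
          abs_of_nonneg hxy]
    _ ≤ x * (L₁ * (x - y)) + (1 - x) * (L₀ * (x - y)) + (x - y) * |g₁ y - g₀ y| := by
        gcongr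
    _ = (x * L₁ + (1 - x) * L₀ + |g₁ y - g₀ y|) * (x - y) := by ring

theorem UN_map_contraction_general
    (f₀ f₁ : ℝ → ℝ → ℝ) (L₀ L₁ LUN : ℝ)
    (hlip1 : ∀ x₁ ∈ Set.Icc (0:ℝ) 1, ∀ x₂ ∈ Set.Icc (0:ℝ) 1,
        ∀ y₁ ∈ Set.Icc (0:ℝ) 1, ∀ y₂ ∈ Set.Icc (0:ℝ) 1,
        |f₁ x₁ x₂ - f₁ y₁ y₂| ≤ L₁ * (|x₁ - y₁| + |x₂ - y₂|))
    (hlip0 : ∀ x₁ ∈ Set.Icc (0:ℝ) 1, ∀ x₂ ∈ Set.Icc (0:ℝ) 1,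
        ∀ y₁ ∈ Set.Icc (0:ℝ) 1, ∀ y₂ ∈ Set.Icc (0:ℝ) 1,
        |f₀ x₁ x₂ - f₀ y₁ y₂| ≤ L₀ * (|x₁ - y₁| + |x₂ - y₂|))
    (hLUN : ∀ π' π : ℝ, 0 ≤ π' → π' ≤ π → π ≤ 1 →
        π * L₁ + (1 - π) * L₀ + |f₁ 0 π' - f₀ 0 π'| ≤ LUN) :
    ∀ x ∈ Set.Icc (0:ℝ) 1, ∀ y ∈ Set.Icc (0:ℝ) 1,
      |(x * f₁ 0 x + (1 - x) * f₀ 0 x) - (y * f₁ 0 y + (1 - y) * f₀ 0 y)|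
        ≤ LUN * |x - y| := by
  intro x hx y hy
  wlog hyx : y ≤ x generalizing x y
  · rw [abs_sub_comm, abs_sub_comm x y]
    exact this y hy x hx (le_of_not_ge hyx)
  have h0 : (0:ℝ) ∈ Set.Icc (0:ℝ) 1 := Set.left_mem_Icc.2 zero_le_one
  have hxy : |x - y| = x - y := abs_of_nonneg (sub_nonneg.2 hyx)
  have h₀ : |f₀ 0 x - f₀ 0 y| ≤ L₀ * (x - y) := by
    simpa [hxy] using hlip0 0 h0 x hx 0 h0 y hy
  have h₁ : |f₁ 0 x - f₁ 0 y| ≤ L₁ * (x - y) := by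
    simpa [hxy] using hlip1 0 h0 x hx 0 h0 y hy
  rw [hxy]
  exact (abs_mixture_sub_le_of_le (f₀ 0) (f₁ 0) hx.1 hx.2 hyx h₀ h₁).trans
    (mul_le_mul_of_nonneg_right (hLUN y x hy.1 hyx hx.2) (sub_nonneg.2 hyx))

/-- If `f₁` and `f₀` are ℓ1-Lipschitz with constants `L₁`, `L₀`, and
`L_UN := sup_{0 ≤ π' ≤ π ≤ 1} [π·L₁ + (1−π)·L₀ + |f₁(0,π') − f₀(0,π')|] < 1`,
then the unconstrained one-step map `f(π) = π·f₁(0,π) + (1−π)·f₀(0,π)` is a contraction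
on `[0,1]` with constant `L_UN`. -/
theorem UN_map_contraction
    (f₀ f₁ : ℝ → ℝ → ℝ) (L₀ L₁ LUN : ℝ)
    (hmap0 : ∀ x ∈ Set.Icc (0:ℝ) 1, ∀ y ∈ Set.Icc (0:ℝ) 1, f₀ x y ∈ Set.Icc (0:ℝ) 1)
    (hmap1 : ∀ x ∈ Set.Icc (0:ℝ) 1, ∀ y ∈ Set.Icc (0:ℝ) 1, f₁ x y ∈ Set.Icc (0:ℝ) 1)
    (hlip1 : ∀ x₁ ∈ Set.Icc (0:ℝ) 1, ∀ x₂ ∈ Set.Icc (0:ℝ) 1,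
        ∀ y₁ ∈ Set.Icc (0:ℝ) 1, ∀ y₂ ∈ Set.Icc (0:ℝ) 1,
        |f₁ x₁ x₂ - f₁ y₁ y₂| ≤ L₁ * (|x₁ - y₁| + |x₂ - y₂|))
    (hlip0 : ∀ x₁ ∈ Set.Icc (0:ℝ) 1, ∀ x₂ ∈ Set.Icc (0:ℝ) 1,
        ∀ y₁ ∈ Set.Icc (0:ℝ) 1, ∀ y₂ ∈ Set.Icc (0:ℝ) 1,
        |f₀ x₁ x₂ - f₀ y₁ y₂| ≤ L₀ * (|x₁ - y₁| + |x₂ - y₂|))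
    (hLUN : ∀ π' π : ℝ, 0 ≤ π' → π' ≤ π → π ≤ 1 →
        π * L₁ + (1 - π) * L₀ + |f₁ 0 π' - f₀ 0 π'| ≤ LUN)
    (hLUN1 : LUN < 1) :
    ∀ x ∈ Set.Icc (0:ℝ) 1, ∀ y ∈ Set.Icc (0:ℝ) 1,
      |(x * f₁ 0 x + (1 - x) * f₀ 0 x) - (y * f₁ 0 y + (1 - y) * f₀ 0 y)|
        ≤ LUN * |x - y| :=
  UN_map_contraction_general f₀ f₁ L₀ L₁ LUN hlip1 hlip0 hLUN
end

section
/- Let g_A ∈ (0,1), let π_A, π_B ∈ [0,1] with π_B ≤ π_A and π_A > 0, and let u₁ ≥ 0 ≥ u₀. If g_A·u₁ + (1−g_A)·u₀ ≤ 0, then the policy τ* given by τ*(1,A) = π_B/π_A, τ*(0,A) = 0, τ*(1,B) = 1, τ*(0,B) = 0 satisfies demographic parity, and U(τ*) ≥ U(τ) for every policy τ satisfying demographic parity. -/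
/-!
Write `q` for the qualified mass a group selects and `s` for the common selection rate, so
that the utility is `(u₁ - u₀) * q + u₀ * s`. Group `B` can select at most `min s π_B`
qualified individuals. If `s ≤ π_B`, the utility is at most `u₁ * s ≤ u₁ * π_B`. If `s > π_B`,
every unit of rate above `π_B` is worth at most `g_A * u₁ + (1 - g_A) * u₀ ≤ 0`. Either way the
utility is at most `u₁ * π_B`, which `τ*` attains.
-/

def selectionRate (π t₁ t₀ : ℝ) : ℝ := t₁ * π + t₀ * (1 - π)

def groupUtility (u₁ u₀ π t₁ t₀ : ℝ) : ℝ := u₁ * t₁ * π + u₀ * t₀ * (1 - π)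

lemma groupUtility_eq (u₁ u₀ π t₁ t₀ : ℝ) :
    groupUtility u₁ u₀ π t₁ t₀ = (u₁ - u₀) * (t₁ * π) + u₀ * selectionRate π t₁ t₀ := by
  unfold groupUtility selectionRate
  ring

lemma mul_le_selectionRate {π t₁ t₀ : ℝ} (hπ : π ≤ 1) (ht₀ : 0 ≤ t₀) :
    t₁ * π ≤ selectionRate π t₁ t₀ :=
  le_add_of_nonneg_right (mul_nonneg ht₀ (sub_nonneg.mpr hπ))

lemma weighted_utility_le {g s p u₁ u₀ x y : ℝ} (hg₀ : 0 ≤ g) (hg₁ : g ≤ 1) (hu₁ : 0 ≤ u₁)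
    (hu : u₀ ≤ u₁) (hmix : g * u₁ + (1 - g) * u₀ ≤ 0)
    (hx : x ≤ s) (hys : y ≤ s) (hyp : y ≤ p) :
    (u₁ - u₀) * (g * x + (1 - g) * y) + u₀ * s ≤ u₁ * p := by
  have hweight : 0 ≤ 1 - g := sub_nonneg.mpr hg₁
  have hgap : 0 ≤ u₁ - u₀ := sub_nonneg.mpr hu
  rcases le_total s p with hsp | hps
  · calc (u₁ - u₀) * (g * x + (1 - g) * y) + u₀ * s
        ≤ (u₁ - u₀) * (g * s + (1 - g) * s) + u₀ * s := by gcongr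
      _ = u₁ * s := by ring
      _ ≤ u₁ * p := by gcongr
  · calc (u₁ - u₀) * (g * x + (1 - g) * y) + u₀ * s
        ≤ (u₁ - u₀) * (g * s + (1 - g) * p) + u₀ * s := by gcongr
      _ = u₁ * p + (s - p) * (g * u₁ + (1 - g) * u₀) := by ring
      _ ≤ u₁ * p :=
        add_le_of_nonpos_right (mul_nonpos_of_nonneg_of_nonpos (sub_nonneg.mpr hps) hmix)

theorem AA1_policy_optimal_general
    (gA πA πB u₁ u₀ : ℝ)
    (hgA : gA ∈ Set.Ioo (0:ℝ) 1)
    (hπA : πA ∈ Set.Icc (0:ℝ) 1) (hπB : πB ∈ Set.Icc (0:ℝ) 1)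
    (hApos : 0 < πA)
    (hu1 : 0 ≤ u₁) (hu0 : u₀ ≤ 0)
    (hAA1 : gA * u₁ + (1 - gA) * u₀ ≤ 0) :
    -- τ* satisfies demographic parity
    ((πB / πA) * πA + 0 * (1 - πA) = 1 * πB + 0 * (1 - πB)) ∧
    -- and U(τ*) ≥ U(τ) for every policy τ satisfying demographic parity
    (∀ τ : Bool → Bool → ℝ,
      (∀ v j, τ v j ∈ Set.Icc (0:ℝ) 1) →
      (τ true true * πA + τ false true * (1 - πA)
        = τ true false * πB + τ false false * (1 - πB)) →
      gA * (u₁ * τ true true * πA + u₀ * τ false true * (1 - πA))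
          + (1 - gA) * (u₁ * τ true false * πB + u₀ * τ false false * (1 - πB))
        ≤ gA * (u₁ * (πB / πA) * πA + u₀ * 0 * (1 - πA))
          + (1 - gA) * (u₁ * 1 * πB + u₀ * 0 * (1 - πB))) := by
  have hstar : πB / πA * πA = πB := div_mul_cancel₀ _ hApos.ne'
  refine ⟨by rw [hstar]; ring, fun τ hτ hparity => ?_⟩
  change selectionRate πA _ _ = selectionRate πB _ _ at hparity
  change gA * groupUtility u₁ u₀ πA _ _ + (1 - gA) * groupUtility u₁ u₀ πB _ _ ≤ _
  have hqA := hparity ▸ mul_le_selectionRate (t₁ := τ true true) hπA.2 (hτ false true).1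
  have hqB := mul_le_selectionRate (t₁ := τ true false) hπB.2 (hτ false false).1
  have hqBπ := mul_le_of_le_one_left hπB.1 (hτ true false).2
  calc gA * groupUtility u₁ u₀ πA _ _ + (1 - gA) * groupUtility u₁ u₀ πB _ _
      = (u₁ - u₀) * (gA * (τ true true * πA) + (1 - gA) * (τ true false * πB))
          + u₀ * selectionRate πB (τ true false) (τ false false) := by
        rw [groupUtility_eq, groupUtility_eq, hparity]
        ring
    _ ≤ u₁ * πB := weighted_utility_le hgA.1.le hgA.2.le hu1 (hu0.trans hu1) hAA1 hqA hqB hqBπ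
    _ = _ := by rw [mul_assoc u₁, hstar]; ring

/-- Proposition: AA1 / under-acceptance case.
Policies are maps `τ : Bool → Bool → ℝ`, where `τ v j` is the selection probability of an
individual with qualification `v` (`true` = qualified) in group `j` (`true` = A, `false` = B).
If `g_A·u₁ + (1−g_A)·u₀ ≤ 0` then the policy
`τ*(1,A) = π_B/π_A, τ*(0,A) = 0, τ*(1,B) = 1, τ*(0,B) = 0`
satisfies demographic parity and maximizes the institutional utility among all
demographic-parity policies. -/
theorem AA1_policy_optimal
    (gA πA πB u₁ u₀ : ℝ)
    (hgA : gA ∈ Set.Ioo (0:ℝ) 1)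
    (hπA : πA ∈ Set.Icc (0:ℝ) 1) (hπB : πB ∈ Set.Icc (0:ℝ) 1)
    (hBA : πB ≤ πA) (hApos : 0 < πA)
    (hu1 : 0 ≤ u₁) (hu0 : u₀ ≤ 0)
    (hAA1 : gA * u₁ + (1 - gA) * u₀ ≤ 0) :
    -- τ* satisfies demographic parity
    ((πB / πA) * πA + 0 * (1 - πA) = 1 * πB + 0 * (1 - πB)) ∧
    -- and U(τ*) ≥ U(τ) for every policy τ satisfying demographic parity
    (∀ τ : Bool → Bool → ℝ,
      (∀ v j, τ v j ∈ Set.Icc (0:ℝ) 1) →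
      (τ true true * πA + τ false true * (1 - πA)
        = τ true false * πB + τ false false * (1 - πB)) →
      gA * (u₁ * τ true true * πA + u₀ * τ false true * (1 - πA))
          + (1 - gA) * (u₁ * τ true false * πB + u₀ * τ false false * (1 - πB))
        ≤ gA * (u₁ * (πB / πA) * πA + u₀ * 0 * (1 - πA))
          + (1 - gA) * (u₁ * 1 * πB + u₀ * 0 * (1 - πB))) :=
  AA1_policy_optimal_general gA πA πB u₁ u₀ hgA hπA hπB hApos hu1 hu0 hAA1
end

section
/- Let g_A ∈ (0,1), let π_A, π_B ∈ [0,1] with π_B ≤ π_A and π_B < 1, and let u₁ ≥ 0 ≥ u₀. If g_A·u₁ + (1−g_A)·u₀ ≥ 0, then the policy τ* given by τ*(1,A) = 1, τ*(0,A) = 0, τ*(1,B) = 1, τ*(0,B) = (π_A − π_B)/(1 − π_B) satisfies demographic parity, and U(τ*) ≥ U(τ) for every policy τ satisfying demographic parity. -/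
/-!
Fix the common selection rate `r` imposed by demographic parity. Within a group of
qualification rate `π`, utility is maximised by selecting qualified individuals first, which
gives `u₁ * min r π + u₀ * max (r - π) 0`. Weighted over the two groups this is a concave
piecewise-linear function of `r` with slopes `u₁ ≥ 0` on `[0, π_B]`, `g_A u₁ + (1 - g_A) u₀ ≥ 0`
on `[π_B, π_A]` and `u₀ ≤ 0` beyond `π_A`, so it peaks at `r = π_A`, which is the rate of `τ*`.
-/

open Set

namespace FairSelection

/-- Utility per capita of a group with qualification rate `π` when a fraction `r` of it is
selected, qualified individuals first. -/
noncomputable def greedyUtility (u₁ u₀ π r : ℝ) : ℝ :=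
  u₁ * min r π + u₀ * max (r - π) 0

theorem groupUtility_le_greedyUtility {u₁ u₀ π p q : ℝ} (hu₁ : 0 ≤ u₁) (hu₀ : u₀ ≤ 0)
    (hπ : π ∈ Icc (0 : ℝ) 1) (hp : p ≤ 1) (hq : 0 ≤ q) :
    u₁ * p * π + u₀ * q * (1 - π) ≤ greedyUtility u₁ u₀ π (p * π + q * (1 - π)) := by
  obtain ⟨hπ₀, hπ₁⟩ := hπ
  have hunqual : 0 ≤ q * (1 - π) := mul_nonneg hq (sub_nonneg.2 hπ₁)
  have hqual : p * π ≤ π := mul_le_of_le_one_left hπ₀ hp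
  rw [greedyUtility, mul_assoc, mul_assoc]
  gcongr u₁ * ?_ + ?_
  · exact le_min (le_add_of_nonneg_right hunqual) hqual
  · exact mul_le_mul_of_nonpos_left (max_le (by linarith) hunqual) hu₀

theorem greedyUtility_self (u₁ u₀ π : ℝ) : greedyUtility u₁ u₀ π π = u₁ * π := by
  simp [greedyUtility]

theorem greedyUtility_of_le {u₁ u₀ π r : ℝ} (h : π ≤ r) :
    greedyUtility u₁ u₀ π r = u₁ * π + u₀ * (r - π) := by
  rw [greedyUtility, min_eq_right h, max_eq_left (sub_nonneg.2 h)]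

theorem greedyUtility_of_ge {u₁ u₀ π r : ℝ} (h : r ≤ π) :
    greedyUtility u₁ u₀ π r = u₁ * r := by
  rw [greedyUtility, min_eq_left h, max_eq_right (sub_nonpos.2 h), mul_zero, add_zero]

theorem weighted_greedyUtility_le {g u₁ u₀ πA πB : ℝ} (hu₁ : 0 ≤ u₁) (hu₀ : u₀ ≤ 0)
    (hBA : πB ≤ πA) (hslope : 0 ≤ g * u₁ + (1 - g) * u₀) (r : ℝ) :
    g * greedyUtility u₁ u₀ πA r + (1 - g) * greedyUtility u₁ u₀ πB r
      ≤ g * greedyUtility u₁ u₀ πA πA + (1 - g) * greedyUtility u₁ u₀ πB πA := by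
  rw [greedyUtility_self, greedyUtility_of_le hBA]
  rcases le_total r πB with hrB | hrB
  · rw [greedyUtility_of_ge (hrB.trans hBA), greedyUtility_of_ge hrB]
    nlinarith [mul_nonneg (sub_nonneg.2 hBA) hslope, mul_nonneg hu₁ (sub_nonneg.2 hrB)]
  rcases le_total r πA with hrA | hrA
  · rw [greedyUtility_of_ge hrA, greedyUtility_of_le hrB]
    nlinarith [mul_nonneg (sub_nonneg.2 hrA) hslope]
  · rw [greedyUtility_of_le hrA, greedyUtility_of_le hrB]
    nlinarith [mul_nonpos_of_nonpos_of_nonneg hu₀ (sub_nonneg.2 hrA)]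

end FairSelection

open FairSelection

/-- Policies are maps `τ : Bool → Bool → ℝ`, where `τ v j` is the selection probability of an
individual with qualification `v` (`true` = qualified) in group `j` (`true` = A, `false` = B). -/
theorem AA2_policy_optimal
    (gA πA πB u₁ u₀ : ℝ)
    (hgA : gA ∈ Set.Ioo (0:ℝ) 1)
    (hπA : πA ∈ Set.Icc (0:ℝ) 1) (hπB : πB ∈ Set.Icc (0:ℝ) 1)
    (hBA : πB ≤ πA) (hBlt : πB < 1)
    (hu1 : 0 ≤ u₁) (hu0 : u₀ ≤ 0)
    (hAA2 : 0 ≤ gA * u₁ + (1 - gA) * u₀) :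
    -- τ* satisfies demographic parity
    (1 * πA + 0 * (1 - πA) = 1 * πB + ((πA - πB) / (1 - πB)) * (1 - πB)) ∧
    -- and U(τ*) ≥ U(τ) for every policy τ satisfying demographic parity
    (∀ τ : Bool → Bool → ℝ,
      (∀ v j, τ v j ∈ Set.Icc (0:ℝ) 1) →
      (τ true true * πA + τ false true * (1 - πA)
        = τ true false * πB + τ false false * (1 - πB)) →
      gA * (u₁ * τ true true * πA + u₀ * τ false true * (1 - πA))
          + (1 - gA) * (u₁ * τ true false * πB + u₀ * τ false false * (1 - πB))
        ≤ gA * (u₁ * 1 * πA + u₀ * 0 * (1 - πA))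
          + (1 - gA) * (u₁ * 1 * πB + u₀ * ((πA - πB) / (1 - πB)) * (1 - πB))) := by
  have hcancel : (πA - πB) / (1 - πB) * (1 - πB) = πA - πB :=
    div_mul_cancel₀ _ (sub_ne_zero.2 hBlt.ne')
  refine ⟨by rw [hcancel]; ring, fun τ hτ hparity => ?_⟩
  have hoptimum : gA * greedyUtility u₁ u₀ πA πA + (1 - gA) * greedyUtility u₁ u₀ πB πA
      = gA * (u₁ * 1 * πA + u₀ * 0 * (1 - πA))
        + (1 - gA) * (u₁ * 1 * πB + u₀ * ((πA - πB) / (1 - πB)) * (1 - πB)) := by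
    rw [greedyUtility_self, greedyUtility_of_le hBA, mul_assoc u₀ ((πA - πB) / (1 - πB)), hcancel]
    ring
  rw [← hoptimum]
  refine le_trans ?_ (weighted_greedyUtility_le hu1 hu0 hBA hAA2
    (τ true true * πA + τ false true * (1 - πA)))
  refine add_le_add (mul_le_mul_of_nonneg_left ?_ hgA.1.le)
    (mul_le_mul_of_nonneg_left ?_ (sub_nonneg.2 hgA.2.le))
  · exact groupUtility_le_greedyUtility hu1 hu0 hπA (hτ _ _).2 (hτ _ _).1
  · rw [hparity]
    exact groupUtility_le_greedyUtility hu1 hu0 hπB (hτ _ _).2 (hτ _ _).1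
end

section
/- Suppose L_AA1 := max over π ∈ [0,1] of |f₁(0,π) − f₀(0,π)| satisfies L_AA1 < 1. For the joint AA1 discrete-time dynamics a_{t+1} = F_A(a_t, b_t), b_{t+1} = F_B(a_t, b_t) (with the roles of the two coordinates swapped at any step where b_t > a_t), one has |F_A(π,π′) − F_B(π,π′)| ≤ L_AA1·|π − π′| for all π ≥ π′ in [0,1]; consequently |a_t − b_t| ≤ L_AA1^t·|a₀ − b₀| → 0 as t → ∞, i.e., society equalizes under AA1. -/
open Filter Set Topology

/-! Both AA1 maps are the same affine function `p ↦ p·f₁(0,π') + (1−p)·f₀(0,π')`, evaluated at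
`p = π` and at `p = π'`; their difference is therefore `(π − π')·(f₁(0,π') − f₀(0,π'))`, of size at
most `L_AA1·|π − π'|`. Since the maps keep `[0,1]²` invariant, the gap between the two groups
shrinks by the factor `L_AA1` at every step, whichever group is ahead. -/

lemma mul_add_one_sub_mul_mem_Icc {p u v : ℝ} (hp : p ∈ Icc (0 : ℝ) 1)
    (hu : u ∈ Icc (0 : ℝ) 1) (hv : v ∈ Icc (0 : ℝ) 1) :
    p * u + (1 - p) * v ∈ Icc (0 : ℝ) 1 := by
  simpa using convex_Icc (0 : ℝ) 1 hu hv hp.1 (sub_nonneg.2 hp.2) (by ring)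

lemma abs_mul_add_one_sub_mul_sub_le {p q u v L : ℝ} (h : |u - v| ≤ L) :
    |(p * u + (1 - p) * v) - (q * u + (1 - q) * v)| ≤ L * |p - q| := by
  calc |(p * u + (1 - p) * v) - (q * u + (1 - q) * v)| = |p - q| * |u - v| := by
        rw [← abs_mul]; ring_nf
    _ ≤ L * |p - q| := by rw [mul_comm]; exact mul_le_mul_of_nonneg_right h (abs_nonneg _)

section SwapDynamics

variable {S : Set ℝ} {FA FB : ℝ → ℝ → ℝ} {a b : ℕ → ℝ}
  (ha : ∀ t, a (t + 1) = if b t ≤ a t then FA (a t) (b t) else FB (b t) (a t))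
  (hb : ∀ t, b (t + 1) = if b t ≤ a t then FB (a t) (b t) else FA (b t) (a t))
include ha hb

lemma swapDynamics_mem (hmaps : ∀ x ∈ S, ∀ y ∈ S, FA x y ∈ S ∧ FB x y ∈ S)
    (ha0 : a 0 ∈ S) (hb0 : b 0 ∈ S) (t : ℕ) : a t ∈ S ∧ b t ∈ S := by
  induction t with
  | zero => exact ⟨ha0, hb0⟩
  | succ t ih =>
    rw [ha, hb]
    split_ifs
    · exact hmaps _ ih.1 _ ih.2
    · exact (hmaps _ ih.2 _ ih.1).symm

lemma swapDynamics_abs_sub_succ_le {L : ℝ}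
    (hcontr : ∀ x ∈ S, ∀ y ∈ S, y ≤ x → |FA x y - FB x y| ≤ L * |x - y|)
    {t : ℕ} (hat : a t ∈ S) (hbt : b t ∈ S) :
    |a (t + 1) - b (t + 1)| ≤ L * |a t - b t| := by
  rw [ha, hb]
  split_ifs with hle
  · exact hcontr _ hat _ hbt hle
  · rw [abs_sub_comm, abs_sub_comm (a t)]
    exact hcontr _ hbt _ hat (le_of_not_ge hle)

end SwapDynamics

/-- society equalizes under AA1.
The AA1 one-step maps are `F_A(π,π') = π·f₁(0,π') + (1−π)·f₀(0,π')` (advantaged group)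
and `F_B(π,π') = π'·f₁(0,π') + (1−π')·f₀(0,π')` (disadvantaged group), where `π ≥ π'`.
If `L_AA1 := max_{π ∈ [0,1]} |f₁(0,π) − f₀(0,π)| < 1`, then
`|F_A(π,π') − F_B(π,π')| ≤ L_AA1·|π − π'|` for all `π ≥ π'` in `[0,1]`, and for the joint
trajectories (with the roles of the coordinates swapped at any step where `b_t > a_t`)
`|a_t − b_t| ≤ L_AA1^t·|a₀ − b₀| → 0`. -/
theorem AA1_equalizes
    (f₀ f₁ : ℝ → ℝ → ℝ) (LAA1 : ℝ)
    (hmap0 : ∀ x ∈ Set.Icc (0:ℝ) 1, ∀ y ∈ Set.Icc (0:ℝ) 1, f₀ x y ∈ Set.Icc (0:ℝ) 1)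
    (hmap1 : ∀ x ∈ Set.Icc (0:ℝ) 1, ∀ y ∈ Set.Icc (0:ℝ) 1, f₁ x y ∈ Set.Icc (0:ℝ) 1)
    (hLAA1 : ∀ π ∈ Set.Icc (0:ℝ) 1, |f₁ 0 π - f₀ 0 π| ≤ LAA1)
    (hLAA1lt : LAA1 < 1)
    (FA FB : ℝ → ℝ → ℝ)
    (hFA : ∀ π π', FA π π' = π * f₁ 0 π' + (1 - π) * f₀ 0 π')
    (hFB : ∀ π π', FB π π' = π' * f₁ 0 π' + (1 - π') * f₀ 0 π')
    (a b : ℕ → ℝ)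
    (ha0 : a 0 ∈ Set.Icc (0:ℝ) 1) (hb0 : b 0 ∈ Set.Icc (0:ℝ) 1)
    (ha : ∀ t, a (t + 1) = if b t ≤ a t then FA (a t) (b t) else FB (b t) (a t))
    (hb : ∀ t, b (t + 1) = if b t ≤ a t then FB (a t) (b t) else FA (b t) (a t)) :
    (∀ π ∈ Set.Icc (0:ℝ) 1, ∀ π' ∈ Set.Icc (0:ℝ) 1, π' ≤ π →
        |FA π π' - FB π π'| ≤ LAA1 * |π - π'|) ∧
    (∀ t, |a t - b t| ≤ LAA1 ^ t * |a 0 - b 0|) ∧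
    Filter.Tendsto (fun t => |a t - b t|) Filter.atTop (nhds 0) := by
  have hL0 : 0 ≤ LAA1 := (abs_nonneg _).trans (hLAA1 0 (left_mem_Icc.2 zero_le_one))
  have hcontr : ∀ π ∈ Icc (0 : ℝ) 1, ∀ π' ∈ Icc (0 : ℝ) 1, π' ≤ π →
      |FA π π' - FB π π'| ≤ LAA1 * |π - π'| := fun π _ π' hπ' _ => by
    rw [hFA, hFB]
    exact abs_mul_add_one_sub_mul_sub_le (hLAA1 π' hπ')
  have hmaps : ∀ x ∈ Icc (0 : ℝ) 1, ∀ y ∈ Icc (0 : ℝ) 1,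
      FA x y ∈ Icc (0 : ℝ) 1 ∧ FB x y ∈ Icc (0 : ℝ) 1 := fun x hx y hy => by
    have h₀ := hmap0 0 (left_mem_Icc.2 zero_le_one) y hy
    have h₁ := hmap1 0 (left_mem_Icc.2 zero_le_one) y hy
    rw [hFA, hFB]
    exact ⟨mul_add_one_sub_mul_mem_Icc hx h₁ h₀, mul_add_one_sub_mul_mem_Icc hy h₁ h₀⟩
  have hmem := swapDynamics_mem ha hb hmaps ha0 hb0
  have hbound : ∀ t, |a t - b t| ≤ LAA1 ^ t * |a 0 - b 0| := fun t =>
    le_geom (u := fun t => |a t - b t|) hL0 t fun k _ =>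
      swapDynamics_abs_sub_succ_le ha hb hcontr (hmem k).1 (hmem k).2
  refine ⟨hcontr, hbound, squeeze_zero (fun _ => abs_nonneg _) hbound ?_⟩
  simpa using (tendsto_pow_atTop_nhds_zero_of_lt_one hL0 hLAA1lt).mul_const |a 0 - b 0|
end

section
/- Let F_A, F_B : [0,1]×[0,1] → [0,1] be Lipschitz continuous and agree on the diagonal: F_A(x,x) = F_B(x,x) for all x ∈ [0,1]. Let π_A, π_B : [0,∞) → [0,1] be differentiable and satisfy the joint continuous-time dynamics dπ_A/dt = F_A(π_A(t), π_B(t)) − π_A(t) and dπ_B/dt = F_B(π_A(t), π_B(t)) − π_B(t). If π_B(0) ≤ π_A(0), then π_B(t) ≤ π_A(t) for all t ≥ 0 (the initial advantage is preserved in continuous time). -/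
open Filter Set Topology

/-- Lemma: advantage is preserved in continuous time.
If `F_A, F_B : [0,1]² → [0,1]` are Lipschitz and agree on the diagonal, and `π_A, π_B` solve
the joint continuous-time dynamics, then `π_B(0) ≤ π_A(0)` implies `π_B(t) ≤ π_A(t)` for
all `t ≥ 0`. -/
theorem CT_order_preserved
    (FA FB : ℝ → ℝ → ℝ) (K : ℝ)
    (hmapA : ∀ x ∈ Set.Icc (0:ℝ) 1, ∀ y ∈ Set.Icc (0:ℝ) 1, FA x y ∈ Set.Icc (0:ℝ) 1)
    (hmapB : ∀ x ∈ Set.Icc (0:ℝ) 1, ∀ y ∈ Set.Icc (0:ℝ) 1, FB x y ∈ Set.Icc (0:ℝ) 1)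
    (hlipA : ∀ x ∈ Set.Icc (0:ℝ) 1, ∀ y ∈ Set.Icc (0:ℝ) 1,
        ∀ x' ∈ Set.Icc (0:ℝ) 1, ∀ y' ∈ Set.Icc (0:ℝ) 1,
        |FA x y - FA x' y'| ≤ K * (|x - x'| + |y - y'|))
    (hlipB : ∀ x ∈ Set.Icc (0:ℝ) 1, ∀ y ∈ Set.Icc (0:ℝ) 1,
        ∀ x' ∈ Set.Icc (0:ℝ) 1, ∀ y' ∈ Set.Icc (0:ℝ) 1,
        |FB x y - FB x' y'| ≤ K * (|x - x'| + |y - y'|))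
    (hdiag : ∀ x ∈ Set.Icc (0:ℝ) 1, FA x x = FB x x)
    (πA πB : ℝ → ℝ)
    (hmemA : ∀ t : ℝ, 0 ≤ t → πA t ∈ Set.Icc (0:ℝ) 1)
    (hmemB : ∀ t : ℝ, 0 ≤ t → πB t ∈ Set.Icc (0:ℝ) 1)
    (hodeA : ∀ t : ℝ, 0 ≤ t →
        HasDerivWithinAt πA (FA (πA t) (πB t) - πA t) (Set.Ici 0) t)
    (hodeB : ∀ t : ℝ, 0 ≤ t →
        HasDerivWithinAt πB (FB (πA t) (πB t) - πB t) (Set.Ici 0) t)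
    (h0 : πB 0 ≤ πA 0) :
    ∀ t : ℝ, 0 ≤ t → πB t ≤ πA t := by
  intro t ht
  -- K is nonnegative
  have hK : 0 ≤ K := by
    have h := hlipA 0 (by norm_num) 0 (by norm_num) 1 (by norm_num) 0 (by norm_num)
    have h2 := abs_nonneg (FA 0 0 - FA 1 0)
    norm_num at h
    linarith
  set d : ℝ → ℝ := fun s => πB s - πA s with hd_def
  set f : ℝ → ℝ := fun s => max (d s) 0 with hf_def
  have hcontd : ContinuousOn d (Set.Ici 0) := fun s hs =>
    ((hodeB s hs).continuousWithinAt.sub (hodeA s hs).continuousWithinAt)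
  have hcontf : ContinuousOn f (Set.Icc 0 t) :=
    (hcontd.mono Set.Icc_subset_Ici_self).sup continuousOn_const
  have hderiv : ∀ x, 0 ≤ x → HasDerivWithinAt d
      (FB (πA x) (πB x) - FA (πA x) (πB x) - d x) (Set.Ici 0) x := by
    intro x hx
    have h := (hodeB x hx).sub (hodeA x hx)
    convert h using 1
    · rfl
    · rfl
    · rfl
    simp only [hd_def]
    ring
  have hvle : ∀ x, 0 ≤ x →
      FB (πA x) (πB x) - FA (πA x) (πB x) ≤ 2 * K * |d x| := by
    intro x hx
    have haI := hmemA x hx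
    have hbI := hmemB x hx
    have h1 := hlipB (πA x) haI (πB x) hbI (πA x) haI (πA x) haI
    have h2 := hlipA (πA x) haI (πA x) haI (πA x) haI (πB x) hbI
    have h3 := hdiag (πA x) haI
    have e1 : FB (πA x) (πB x) - FB (πA x) (πA x)
        ≤ K * (|πA x - πA x| + |πB x - πA x|) := le_trans (le_abs_self _) h1
    have e2 : FA (πA x) (πA x) - FA (πA x) (πB x)
        ≤ K * (|πA x - πA x| + |πA x - πB x|) := le_trans (le_abs_self _) h2
    have hab : |πA x - πB x| = |d x| := by rw [abs_sub_comm]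
    simp only [sub_self, abs_zero, zero_add] at e1 e2
    rw [hab] at e2
    have : |πB x - πA x| = |d x| := rfl
    rw [this] at e1
    linarith
  -- key Gronwall hypothesis
  have hf' : ∀ x ∈ Set.Ico (0:ℝ) t, ∀ r, (2 * K) * f x < r →
      ∃ᶠ z in 𝓝[>] x, (z - x)⁻¹ * (f z - f x) < r := by
    intro x hx r hr
    have hx0 : (0:ℝ) ≤ x := hx.1
    have hIoi : Set.Ioi x ⊆ Set.Ici (0:ℝ) := fun z hz => le_of_lt (lt_of_le_of_lt hx0 hz)
    have hdx : HasDerivWithinAt d (FB (πA x) (πB x) - FA (πA x) (πB x) - d x)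
        (Set.Ioi x) x := (hderiv x hx0).mono hIoi
    rw [hasDerivWithinAt_iff_tendsto_slope,
      Set.diff_singleton_eq_self (fun h => lt_irrefl x (Set.mem_Ioi.1 h))] at hdx
    have hdcont : Filter.Tendsto d (𝓝[>] x) (𝓝 (d x)) :=
      (hcontd x hx0).tendsto.mono_left (nhdsWithin_mono x hIoi)
    rcases lt_trichotomy (d x) 0 with hneg | hzero | hpos
    · -- d x < 0 : f = 0 near x
      have hfx : f x = 0 := max_eq_right hneg.le
      have hr0 : 0 < r := by rw [hfx] at hr; simpa using hr
      have ev : ∀ᶠ z in 𝓝[>] x, d z < 0 := hdcont.eventually (eventually_lt_nhds hneg)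
      refine (ev.mono fun z hz => ?_).frequently
      have : f z = 0 := max_eq_right hz.le
      rw [this, hfx]
      simpa using hr0
    · -- d x = 0
      have hfx : f x = 0 := by rw [hf_def]; simp [hzero]
      have hr0 : 0 < r := by rw [hfx] at hr; simpa using hr
      have hba : πB x = πA x := by
        have : πB x - πA x = 0 := hzero
        linarith
      have hv0 : FB (πA x) (πB x) - FA (πA x) (πB x) - d x = 0 := by
        rw [hba, hzero, ← hdiag (πA x) (hmemA x hx0)]
        ring
      rw [hv0] at hdx
      have ev : ∀ᶠ z in 𝓝[>] x, slope d x z < r := (tendsto_order.1 hdx).2 r hr0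
      refine ((ev.and self_mem_nhdsWithin).mono fun z hz => ?_).frequently
      obtain ⟨hsl, hzx⟩ := hz
      have hzx' : (0:ℝ) < z - x := sub_pos.2 hzx
      rw [slope_def_field, hzero, sub_zero, div_eq_inv_mul] at hsl
      rw [hfx, sub_zero, hf_def]
      have : (z - x)⁻¹ * max (d z) 0 = max ((z - x)⁻¹ * d z) ((z - x)⁻¹ * 0) :=
        mul_max_of_nonneg _ _ (inv_nonneg.2 hzx'.le)
      rw [this, mul_zero]
      exact max_lt hsl hr0
    · -- d x > 0 : f = d near x
      have hfx : f x = d x := max_eq_left hpos.le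
      have hvr : FB (πA x) (πB x) - FA (πA x) (πB x) - d x < r := by
        have := hvle x hx0
        rw [abs_of_pos hpos] at this
        rw [hfx] at hr
        linarith
      have ev1 : ∀ᶠ z in 𝓝[>] x, slope d x z < r := (tendsto_order.1 hdx).2 r hvr
      have ev2 : ∀ᶠ z in 𝓝[>] x, 0 < d z := hdcont.eventually (eventually_gt_nhds hpos)
      refine ((ev1.and (ev2.and self_mem_nhdsWithin)).mono fun z hz => ?_).frequently
      obtain ⟨hsl, hdz, hzx⟩ := hz
      have hfz : f z = d z := max_eq_left hdz.le
      rw [hfz, hfx]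
      rwa [slope_def_field, div_eq_inv_mul] at hsl
  have key := le_gronwallBound_of_liminf_deriv_right_le (f := f)
      (f' := fun s => (2 * K) * f s) (δ := 0) (K := 2 * K) (ε := 0) (a := 0) (b := t)
      hcontf hf' (by simp [hf_def, hd_def, h0]) (fun x _ => by simp)
  have hft := key t (Set.mem_Icc.2 ⟨ht, le_rfl⟩)
  rw [sub_zero, gronwallBound_ε0_δ0] at hft
  have : d t ≤ 0 := le_trans (le_max_left _ _) hft
  simpa [hd_def] using this
end

section
/- Let F_A, F_B : [0,1]×[0,1] → [0,1] satisfy |F_A(π,π′) − F_B(π,π′)| ≤ L·|π − π′| for all π, π′ ∈ [0,1], with L ∈ [0,1). Let π_A, π_B : [0,∞) → [0,1] be differentiable and satisfy the joint continuous-time dynamics dπ_A/dt = F_A(π_A(t), π_B(t)) − π_A(t) and dπ_B/dt = F_B(π_A(t), π_B(t)) − π_B(t). Then |π_A(t) − π_B(t)| ≤ |π_A(0) − π_B(0)|·e^{−(1−L)t} for all t ≥ 0; in particular |π_A(t) − π_B(t)| → 0 as t → ∞, i.e., the population reaches equality in continuous time. -/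
open Filter Set Topology

/-- Lemma: AA contraction implies CT equality.
If `|F_A(π,π') − F_B(π,π')| ≤ L·|π − π'|` on `[0,1]²` with `L ∈ [0,1)` and `π_A, π_B` solve
the joint continuous-time dynamics, then
`|π_A(t) − π_B(t)| ≤ |π_A(0) − π_B(0)|·e^{−(1−L)t}` for all `t ≥ 0`, so the population
reaches equality in continuous time. -/
theorem CT_contraction_equalizes
    (FA FB : ℝ → ℝ → ℝ) (L : ℝ) (hL0 : 0 ≤ L) (hL1 : L < 1)
    (hcontr : ∀ π ∈ Set.Icc (0:ℝ) 1, ∀ π' ∈ Set.Icc (0:ℝ) 1,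
        |FA π π' - FB π π'| ≤ L * |π - π'|)
    (hmapA : ∀ x ∈ Set.Icc (0:ℝ) 1, ∀ y ∈ Set.Icc (0:ℝ) 1, FA x y ∈ Set.Icc (0:ℝ) 1)
    (hmapB : ∀ x ∈ Set.Icc (0:ℝ) 1, ∀ y ∈ Set.Icc (0:ℝ) 1, FB x y ∈ Set.Icc (0:ℝ) 1)
    (πA πB : ℝ → ℝ)
    (hmemA : ∀ t : ℝ, 0 ≤ t → πA t ∈ Set.Icc (0:ℝ) 1)
    (hmemB : ∀ t : ℝ, 0 ≤ t → πB t ∈ Set.Icc (0:ℝ) 1)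
    (hodeA : ∀ t : ℝ, 0 ≤ t →
        HasDerivWithinAt πA (FA (πA t) (πB t) - πA t) (Set.Ici 0) t)
    (hodeB : ∀ t : ℝ, 0 ≤ t →
        HasDerivWithinAt πB (FB (πA t) (πB t) - πB t) (Set.Ici 0) t) :
    (∀ t : ℝ, 0 ≤ t →
        |πA t - πB t| ≤ |πA 0 - πB 0| * Real.exp (-(1 - L) * t)) ∧
    Filter.Tendsto (fun t => |πA t - πB t|) Filter.atTop (nhds 0) := by
  have key : ∀ t : ℝ, 0 ≤ t →
      |πA t - πB t| ≤ |πA 0 - πB 0| * Real.exp (-(1 - L) * t) := by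
    intro T hT
    set f : ℝ → ℝ := fun t => πA t - πB t with hf
    set u : ℝ → ℝ := fun t => (f t)^2 * Real.exp (2*(1-L)*t) with hu
    -- derivative of u within Ici 0
    have hud : ∀ t : ℝ, 0 ≤ t → HasDerivWithinAt u
        ((2 * f t * ((FA (πA t) (πB t) - πA t) - (FB (πA t) (πB t) - πB t)))
          * Real.exp (2*(1-L)*t)
          + (f t)^2 * (Real.exp (2*(1-L)*t) * (2*(1-L)))) (Set.Ici 0) t := by
      intro t ht
      have hfd : HasDerivWithinAt f
          ((FA (πA t) (πB t) - πA t) - (FB (πA t) (πB t) - πB t)) (Set.Ici 0) t :=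
        (hodeA t ht).sub (hodeB t ht)
      have hsq : HasDerivWithinAt (fun s => (f s)^2)
          (2 * f t * ((FA (πA t) (πB t) - πA t) - (FB (πA t) (πB t) - πB t)))
          (Set.Ici 0) t := by
        have := hfd.pow 2
        simpa [Pi.pow_def, mul_comm, mul_assoc, mul_left_comm] using this
      have hexp : HasDerivWithinAt (fun s => Real.exp (2*(1-L)*s))
          (Real.exp (2*(1-L)*t) * (2*(1-L))) (Set.Ici 0) t := by
        have h1 : HasDerivWithinAt (fun s : ℝ => 2*(1-L)*s) (2*(1-L)) (Set.Ici 0) t := by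
          simpa using ((hasDerivWithinAt_id t (Set.Ici 0)).const_mul (2*(1-L)))
        simpa using h1.exp
      exact hsq.mul hexp
    have huc : ContinuousOn u (Set.Icc 0 T) := by
      intro t ht
      exact ((hud t ht.1).continuousWithinAt).mono (Set.Icc_subset_Ici_self)
    -- the derivative is nonpositive for t ≥ 0
    have hle : ∀ t : ℝ, 0 ≤ t →
        (2 * f t * ((FA (πA t) (πB t) - πA t) - (FB (πA t) (πB t) - πB t)))
          * Real.exp (2*(1-L)*t)
          + (f t)^2 * (Real.exp (2*(1-L)*t) * (2*(1-L))) ≤ 0 := by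
      intro t ht
      have hA := hmemA t ht
      have hB := hmemB t ht
      have hc := hcontr (πA t) hA (πB t) hB
      have hfd : f t * (FA (πA t) (πB t) - FB (πA t) (πB t)) ≤ L * (f t)^2 := by
        have h1 : f t * (FA (πA t) (πB t) - FB (πA t) (πB t))
            ≤ |f t| * |FA (πA t) (πB t) - FB (πA t) (πB t)| := by
          calc f t * (FA (πA t) (πB t) - FB (πA t) (πB t))
              ≤ |f t * (FA (πA t) (πB t) - FB (πA t) (πB t))| := le_abs_self _
            _ = |f t| * |FA (πA t) (πB t) - FB (πA t) (πB t)| := abs_mul _ _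
        have h2 : |f t| * |FA (πA t) (πB t) - FB (πA t) (πB t)| ≤ |f t| * (L * |f t|) :=
          mul_le_mul_of_nonneg_left hc (abs_nonneg _)
        have h3 : |f t| * (L * |f t|) = L * (f t)^2 := by
          rw [← sq_abs (f t)]; ring
        linarith
      have hex : (0:ℝ) < Real.exp (2*(1-L)*t) := Real.exp_pos _
      have e : 2 * f t * ((FA (πA t) (πB t) - πA t) - (FB (πA t) (πB t) - πB t))
          + (f t)^2 * (2*(1-L))
          = 2 * (f t * (FA (πA t) (πB t) - FB (πA t) (πB t)) - L * (f t)^2) := by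
        simp only [hf]; ring
      have hbr : 2 * f t * ((FA (πA t) (πB t) - πA t) - (FB (πA t) (πB t) - πB t))
          + (f t)^2 * (2*(1-L)) ≤ 0 := by rw [e]; linarith
      nlinarith [hbr, hex]
    -- u is antitone on [0, T]
    have hanti : u T ≤ u 0 := by
      rcases eq_or_lt_of_le hT with h | h
      · rw [← h]
      · have : AntitoneOn u (Set.Icc 0 T) := by
          apply antitoneOn_of_deriv_nonpos (convex_Icc 0 T) huc
          · intro x hx
            rw [interior_Icc] at hx
            exact (((hud x hx.1.le).hasDerivAt (Ici_mem_nhds hx.1)).differentiableAt).differentiableWithinAt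
          · intro x hx
            rw [interior_Icc] at hx
            have hd := (hud x hx.1.le).hasDerivAt (Ici_mem_nhds hx.1)
            rw [hd.deriv]
            exact hle x hx.1.le
        exact this (Set.left_mem_Icc.2 hT) (Set.right_mem_Icc.2 hT) hT
    have hu0 : u 0 = (f 0)^2 := by simp [hu]
    have hkey : (f T)^2 * Real.exp (2*(1-L)*T) ≤ (f 0)^2 := by
      rw [← hu0]; exact hanti
    -- conclude by comparing squares
    have hsq2 : |f T| ^ 2 ≤ (|f 0| * Real.exp (-(1-L)*T)) ^ 2 := by
      have he : Real.exp (-(1-L)*T) * Real.exp (-(1-L)*T) * Real.exp (2*(1-L)*T) = 1 := by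
        rw [← Real.exp_add, ← Real.exp_add, show -(1-L)*T + -(1-L)*T + 2*(1-L)*T = 0 by ring,
          Real.exp_zero]
      have h3 : (f T)^2 * Real.exp (2*(1-L)*T) * (Real.exp (-(1-L)*T) * Real.exp (-(1-L)*T))
          ≤ (f 0)^2 * (Real.exp (-(1-L)*T) * Real.exp (-(1-L)*T)) :=
        mul_le_mul_of_nonneg_right hkey (by positivity)
      rw [sq_abs, mul_pow, sq_abs]
      nlinarith [h3, he, sq_nonneg (f T)]
    have hnn : (0:ℝ) ≤ |f 0| * Real.exp (-(1-L)*T) :=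
      mul_nonneg (abs_nonneg _) (Real.exp_pos _).le
    calc |f T| = ((|f T|)^2).sqrt := by rw [Real.sqrt_sq (abs_nonneg _)]
      _ ≤ ((|f 0| * Real.exp (-(1-L)*T))^2).sqrt := Real.sqrt_le_sqrt hsq2
      _ = |f 0| * Real.exp (-(1-L)*T) := Real.sqrt_sq hnn
  refine ⟨key, ?_⟩
  have hlim : Tendsto (fun t : ℝ => |πA 0 - πB 0| * Real.exp (-(1 - L) * t)) atTop (nhds 0) := by
    have h1 : Tendsto (fun t : ℝ => (1 - L) * t) atTop atTop :=
      Tendsto.const_mul_atTop (by linarith) tendsto_id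
    have h2 : Tendsto (fun t : ℝ => Real.exp (-((1 - L) * t))) atTop (nhds 0) :=
      Real.tendsto_exp_neg_atTop_nhds_zero.comp h1
    have h3 := h2.const_mul (|πA 0 - πB 0|)
    simp only [mul_zero] at h3
    simp only [neg_mul]
    exact h3
  apply squeeze_zero' (Eventually.of_forall fun t => abs_nonneg _) _ hlim
  filter_upwards [eventually_ge_atTop (0:ℝ)] with t ht
  exact key t ht
end

section
/- Let F_A, F_B : [0,1]×[0,1] → [0,1] be Lipschitz continuous, agree on the diagonal (F_A(x,x) = F_B(x,x) for all x), and satisfy |F_A(π,π′) − F_B(π,π′)| ≤ L·|π − π′| for all π, π′ ∈ [0,1] with L ∈ [0,1). Let π_A, π_B : [0,∞) → [0,1] be differentiable solutions of the joint continuous-time dynamics dπ_A/dt = F_A(π_A, π_B) − π_A, dπ_B/dt = F_B(π_A, π_B) − π_B, with π_A(0) ≥ π_B(0), and set Δ_t := π_A(t) − π_B(t), Δ₀ := π_A(0) − π_B(0). Then for all t ≥ 0: Δ₀·e^{−(1+L)t} ≤ Δ_t ≤ Δ₀·e^{−(1−L)t}. -/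
open Filter Set Topology

/-- Lemma: two-sided CT bound on the gap.
If `F_A, F_B : [0,1]² → [0,1]` are Lipschitz, agree on the diagonal, and satisfy
`|F_A(π,π') − F_B(π,π')| ≤ L·|π − π'|` with `L ∈ [0,1)`, then for solutions of the joint
continuous-time dynamics with `π_A(0) ≥ π_B(0)`, the gap `Δ_t = π_A(t) − π_B(t)` obeys
`Δ₀·e^{−(1+L)t} ≤ Δ_t ≤ Δ₀·e^{−(1−L)t}` for all `t ≥ 0`. -/
theorem CT_two_sided_gap_bound
    (FA FB : ℝ → ℝ → ℝ) (L K : ℝ) (hL0 : 0 ≤ L) (hL1 : L < 1)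
    (hmapA : ∀ x ∈ Set.Icc (0:ℝ) 1, ∀ y ∈ Set.Icc (0:ℝ) 1, FA x y ∈ Set.Icc (0:ℝ) 1)
    (hmapB : ∀ x ∈ Set.Icc (0:ℝ) 1, ∀ y ∈ Set.Icc (0:ℝ) 1, FB x y ∈ Set.Icc (0:ℝ) 1)
    (hlipA : ∀ x ∈ Set.Icc (0:ℝ) 1, ∀ y ∈ Set.Icc (0:ℝ) 1,
        ∀ x' ∈ Set.Icc (0:ℝ) 1, ∀ y' ∈ Set.Icc (0:ℝ) 1,
        |FA x y - FA x' y'| ≤ K * (|x - x'| + |y - y'|))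
    (hlipB : ∀ x ∈ Set.Icc (0:ℝ) 1, ∀ y ∈ Set.Icc (0:ℝ) 1,
        ∀ x' ∈ Set.Icc (0:ℝ) 1, ∀ y' ∈ Set.Icc (0:ℝ) 1,
        |FB x y - FB x' y'| ≤ K * (|x - x'| + |y - y'|))
    (hdiag : ∀ x ∈ Set.Icc (0:ℝ) 1, FA x x = FB x x)
    (hcontr : ∀ π ∈ Set.Icc (0:ℝ) 1, ∀ π' ∈ Set.Icc (0:ℝ) 1,
        |FA π π' - FB π π'| ≤ L * |π - π'|)
    (πA πB : ℝ → ℝ)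
    (hmemA : ∀ t : ℝ, 0 ≤ t → πA t ∈ Set.Icc (0:ℝ) 1)
    (hmemB : ∀ t : ℝ, 0 ≤ t → πB t ∈ Set.Icc (0:ℝ) 1)
    (hodeA : ∀ t : ℝ, 0 ≤ t →
        HasDerivWithinAt πA (FA (πA t) (πB t) - πA t) (Set.Ici 0) t)
    (hodeB : ∀ t : ℝ, 0 ≤ t →
        HasDerivWithinAt πB (FB (πA t) (πB t) - πB t) (Set.Ici 0) t)
    (h0 : πB 0 ≤ πA 0) :
    ∀ t : ℝ, 0 ≤ t →
      (πA 0 - πB 0) * Real.exp (-(1 + L) * t) ≤ πA t - πB t ∧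
      πA t - πB t ≤ (πA 0 - πB 0) * Real.exp (-(1 - L) * t) := by
  intro t ht
  -- notation
  set Δ : ℝ → ℝ := fun u => πA u - πB u with hΔdef
  set h : ℝ → ℝ := fun u => Δ u * Real.exp u with hhdef
  set h' : ℝ → ℝ := fun u => (FA (πA u) (πB u) - FB (πA u) (πB u)) * Real.exp u with hh'def
  have hΔ0 : 0 ≤ Δ 0 := by simp [hΔdef]; linarith
  -- derivative of h
  have hderiv : ∀ u : ℝ, 0 ≤ u → HasDerivWithinAt h (h' u) (Set.Ici 0) u := by
    intro u hu
    have hA := hodeA u hu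
    have hB := hodeB u hu
    have hΔ' : HasDerivWithinAt Δ
        ((FA (πA u) (πB u) - πA u) - (FB (πA u) (πB u) - πB u)) (Set.Ici 0) u := hA.sub hB
    have he : HasDerivWithinAt Real.exp (Real.exp u) (Set.Ici 0) u :=
      (Real.hasDerivAt_exp u).hasDerivWithinAt
    have := hΔ'.mul he
    refine this.congr_deriv ?_
    simp only [hΔdef, hh'def]
    ring
  -- bound on derivative
  have hbound : ∀ u : ℝ, 0 ≤ u → |h' u| ≤ L * |h u| := by
    intro u hu
    have h1 : |FA (πA u) (πB u) - FB (πA u) (πB u)| ≤ L * |πA u - πB u| :=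
      hcontr _ (hmemA u hu) _ (hmemB u hu)
    have he : (0:ℝ) < Real.exp u := Real.exp_pos u
    calc |h' u| = |FA (πA u) (πB u) - FB (πA u) (πB u)| * Real.exp u := by
          rw [hh'def]; rw [abs_mul, abs_of_pos he]
      _ ≤ (L * |πA u - πB u|) * Real.exp u := by
          exact mul_le_mul_of_nonneg_right h1 he.le
      _ = L * |h u| := by rw [hhdef]; simp [hΔdef, abs_mul, abs_of_pos he]; ring
  -- continuity
  have hcont : ContinuousOn h (Set.Ici 0) := fun u hu => (hderiv u hu).continuousWithinAt
  -- forward Gronwall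
  have gronF : ∀ s u : ℝ, 0 ≤ s → s ≤ u → |h u| ≤ |h s| * Real.exp (L * (u - s)) := by
    intro s u hs hsu
    have key := norm_le_gronwallBound_of_norm_deriv_right_le (f := h) (f' := h')
      (δ := ‖h s‖) (K := L) (ε := 0) (a := s) (b := u)
      (hcont.mono (fun p hp => le_trans hs hp.1))
      (fun p hp => (hderiv p (le_trans hs hp.1)).mono (Set.Ici_subset_Ici.mpr (le_trans hs hp.1)))
      le_rfl
      (fun p hp => by
        simpa using hbound p (le_trans hs hp.1))
      u ⟨hsu, le_rfl⟩
    simpa [gronwallBound_ε0, Real.norm_eq_abs] using key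
  -- backward Gronwall
  have gronB : ∀ u : ℝ, 0 ≤ u → |h 0| ≤ |h u| * Real.exp (L * u) := by
    intro u hu
    rcases eq_or_lt_of_le hu with rfl | hu'
    · simp
    have gderiv : ∀ s ∈ Set.Ico (0:ℝ) u,
        HasDerivWithinAt (fun s => h (u - s)) (-(h' (u - s))) (Set.Ici s) s := by
      intro s hs
      have hpos : 0 < u - s := by linarith [hs.2]
      have H : HasDerivAt h (h' (u - s)) (u - s) :=
        (hderiv _ hpos.le).hasDerivAt (Ici_mem_nhds hpos)
      have hu' : HasDerivAt (fun s : ℝ => u - s) (-1) s := by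
        simpa using (hasDerivAt_id s).const_sub u
      have := H.comp s hu'
      have h2 := this.hasDerivWithinAt (s := Set.Ici s)
      simp only [mul_neg, mul_one] at h2
      exact h2
    have gcont : ContinuousOn (fun s => h (u - s)) (Set.Icc 0 u) := by
      apply hcont.comp ((continuous_const.sub continuous_id).continuousOn)
      intro s hs
      simp only [Set.mem_Ici, Pi.sub_apply, id_eq]
      simp only [Set.mem_Icc] at hs
      linarith [hs.2]
    have key := norm_le_gronwallBound_of_norm_deriv_right_le (f := fun s => h (u - s))
      (f' := fun s => -(h' (u - s))) (δ := ‖h u‖) (K := L) (ε := 0) (a := 0) (b := u)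
      gcont gderiv (by simp) 
      (fun p hp => by
        have hb := hbound (u - p) (by linarith [hp.2, hp.1])
        simpa using hb)
      u ⟨hu, le_rfl⟩
    simpa [gronwallBound_ε0, Real.norm_eq_abs] using key
  constructor
  · -- lower bound
    rcases eq_or_lt_of_le hΔ0 with hz | hpos
    · -- Δ 0 = 0 : everything collapses to 0
      have hF := gronF 0 t le_rfl ht
      have h0' : |h 0| = 0 := by simp [hhdef, ← hz]
      have : |h t| ≤ 0 := by
        have := hF; rw [h0'] at this; simpa using this
      have ht0 : h t = 0 := abs_eq_zero.mp (le_antisymm this (abs_nonneg _))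
      have hΔt : Δ t = 0 := by
        have he : Real.exp t ≠ 0 := (Real.exp_pos t).ne'
        have := ht0
        simp only [hhdef] at this
        exact (mul_eq_zero.mp this).resolve_right he
      simp only [hΔdef] at hΔt hz
      rw [← hz]
      simp [hΔt, ← hz]
    · -- Δ 0 > 0 : h stays positive
      have hpos' : ∀ u ∈ Set.Icc 0 t, h u ≠ 0 := by
        intro u hu
        have hb := gronB u hu.1
        have h0pos : 0 < h 0 := by
          have he0 : h 0 = Δ 0 := by simp [hhdef]
          rw [he0]; exact hpos
        intro hzz
        rw [hzz] at hb
        simp at hb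
        linarith
      have hht : 0 < h t := by
        by_contra hle
        push_neg at hle
        have hlt : h t < 0 := lt_of_le_of_ne hle (hpos' t ⟨ht, le_rfl⟩)
        have h0p : 0 < h 0 := by
          simp only [hhdef]
          have : (0:ℝ) < Δ 0 := hpos
          positivity
        have : (0:ℝ) ∈ h '' Set.Icc 0 t := by
          apply intermediate_value_Icc' ht (hcont.mono (fun p hp => hp.1))
          exact ⟨hlt.le, h0p.le⟩
        obtain ⟨u, hu, hu0⟩ := this
        exact hpos' u hu hu0
      have hb := gronB t ht
      have h0eq : |h 0| = Δ 0 := by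
        rw [abs_of_pos]
        · simp [hhdef]
        · simp only [hhdef]
          have : (0:ℝ) < Δ 0 := hpos
          positivity
      rw [h0eq, abs_of_pos hht] at hb
      -- hb : Δ 0 ≤ h t * exp (L * t), h t = Δ t * exp t
      have hexp : Real.exp t * Real.exp (L * t) * Real.exp (-(1 + L) * t) = 1 := by
        rw [← Real.exp_add, ← Real.exp_add,
          show t + L * t + -(1 + L) * t = 0 by ring, Real.exp_zero]
      have := mul_le_mul_of_nonneg_right hb (Real.exp_pos (-(1 + L) * t)).le
      calc (πA 0 - πB 0) * Real.exp (-(1 + L) * t) = Δ 0 * Real.exp (-(1 + L) * t) := rfl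
        _ ≤ h t * Real.exp (L * t) * Real.exp (-(1 + L) * t) := this
        _ = Δ t * (Real.exp t * Real.exp (L * t) * Real.exp (-(1 + L) * t)) := by
            simp only [hhdef]; ring
        _ = πA t - πB t := by rw [hexp]; simp [hΔdef]
  · -- upper bound
    have hF := gronF 0 t le_rfl ht
    have h0eq : |h 0| = Δ 0 := by
      rw [hhdef]
      simp only
      rw [abs_mul, abs_of_nonneg hΔ0, abs_of_pos (Real.exp_pos 0)]
      simp
    rw [h0eq] at hF
    have habs : Δ t * Real.exp t ≤ |h t| := by
      calc Δ t * Real.exp t ≤ |Δ t * Real.exp t| := le_abs_self _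
        _ = |h t| := rfl
    have key : Δ t * Real.exp t ≤ Δ 0 * Real.exp (L * (t - 0)) := le_trans habs hF
    have hexp : Real.exp (L * (t - 0)) * Real.exp (-(1 - L) * t) * Real.exp t
        = Real.exp (L * t) * Real.exp t * Real.exp (-(1-L) * t) := by ring
    -- multiply key by exp(-t)
    have hmul := mul_le_mul_of_nonneg_right key (Real.exp_pos (-t)).le
    have e1 : Δ t * Real.exp t * Real.exp (-t) = Δ t := by
      rw [mul_assoc, ← Real.exp_add]
      simp
    have e2 : Δ 0 * Real.exp (L * (t - 0)) * Real.exp (-t) = Δ 0 * Real.exp (-(1 - L) * t) := by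
      rw [mul_assoc, ← Real.exp_add]
      congr 2
      ring
    rw [e1, e2] at hmul
    exact hmul
end

section
/- Suppose there exists L_UN ∈ [0,1) such that the UN one-step map f satisfies |f′(π)| ≤ L_UN for all π ∈ [0,1] (one-sided derivatives at the endpoints). Then |f₁(0,π) − f₀(0,π)| < 1 for every π ∈ [0,1]; consequently, by continuity and compactness, L_AA1 := max over π ∈ [0,1] of |f₁(0,π) − f₀(0,π)| satisfies L_AA1 < 1 (the sufficient condition for the AA1 policy to equalize). -/
open Filter Set Topology

/-- If `φ` has a min at the left endpoint of `[a,b]`, the (one-sided) derivative is `≥ 0`. -/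
lemma min_left_deriv_nonneg {φ : ℝ → ℝ} {a b d : ℝ} (hab : a < b)
    (h : HasDerivWithinAt φ d (Set.Icc a b) a)
    (hmin : ∀ x ∈ Set.Icc a b, φ a ≤ φ x) : 0 ≤ d := by
  rw [hasDerivWithinAt_iff_tendsto_slope] at h
  rw [Set.Icc_diff_left] at h
  have hne : (𝓝[Set.Ioc a b] a).NeBot := by
    refine mem_closure_iff_nhdsWithin_neBot.mp ?_
    rw [closure_Ioc hab.ne]
    exact Set.left_mem_Icc.mpr hab.le
  refine ge_of_tendsto h ?_
  filter_upwards [self_mem_nhdsWithin] with x hx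
  have h1 : φ a ≤ φ x := hmin x (Set.Ioc_subset_Icc_self hx)
  have h2 : 0 < x - a := sub_pos.mpr hx.1
  rw [slope_def_field]
  exact div_nonneg (sub_nonneg.mpr h1) h2.le

/-- If `φ` has a min at the right endpoint of `[a,b]`, the (one-sided) derivative is `≤ 0`. -/
lemma min_right_deriv_nonpos {φ : ℝ → ℝ} {a b d : ℝ} (hab : a < b)
    (h : HasDerivWithinAt φ d (Set.Icc a b) b)
    (hmin : ∀ x ∈ Set.Icc a b, φ b ≤ φ x) : d ≤ 0 := by
  rw [hasDerivWithinAt_iff_tendsto_slope] at h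
  rw [Set.Icc_sdiff_right] at h
  have hne : (𝓝[Set.Ico a b] b).NeBot := by
    refine mem_closure_iff_nhdsWithin_neBot.mp ?_
    rw [closure_Ico hab.ne]
    exact Set.right_mem_Icc.mpr hab.le
  refine le_of_tendsto h ?_
  filter_upwards [self_mem_nhdsWithin] with x hx
  have h1 : φ b ≤ φ x := hmin x (Set.Ico_subset_Icc_self hx)
  have h2 : x - b < 0 := sub_neg.mpr hx.2
  rw [slope_def_field]
  exact div_nonpos_of_nonneg_of_nonpos (sub_nonneg.mpr h1) h2.le

lemma max_left_deriv_nonpos {φ : ℝ → ℝ} {a b d : ℝ} (hab : a < b)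
    (h : HasDerivWithinAt φ d (Set.Icc a b) a)
    (hmax : ∀ x ∈ Set.Icc a b, φ x ≤ φ a) : d ≤ 0 := by
  have := min_left_deriv_nonneg (φ := fun x => -φ x) (d := -d) hab h.neg
    (fun x hx => neg_le_neg (hmax x hx))
  linarith

lemma max_right_deriv_nonneg {φ : ℝ → ℝ} {a b d : ℝ} (hab : a < b)
    (h : HasDerivWithinAt φ d (Set.Icc a b) b)
    (hmax : ∀ x ∈ Set.Icc a b, φ x ≤ φ b) : 0 ≤ d := by
  have := min_right_deriv_nonpos (φ := fun x => -φ x) (d := -d) hab h.neg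
    (fun x hx => neg_le_neg (hmax x hx))
  linarith

/-- from Theorem: UN equality implies AA1 equality condition.
If the UN one-step map `f(π) = π·f₁(0,π) + (1−π)·f₀(0,π)` has `|f′(π)| ≤ L_UN < 1` on
`[0,1]` (one-sided derivatives at the endpoints), then `|f₁(0,π) − f₀(0,π)| < 1` for all
`π ∈ [0,1]`, and consequently the maximum `L_AA1` of `|f₁(0,π) − f₀(0,π)|` over `[0,1]`
exists and satisfies `L_AA1 < 1`. -/
theorem UN_contraction_implies_AA1_condition
    (f₀ f₁ : ℝ → ℝ → ℝ) (LUN : ℝ) (hLUN1 : LUN < 1)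
    (hmap0 : ∀ x ∈ Set.Icc (0:ℝ) 1, ∀ y ∈ Set.Icc (0:ℝ) 1, f₀ x y ∈ Set.Icc (0:ℝ) 1)
    (hmap1 : ∀ x ∈ Set.Icc (0:ℝ) 1, ∀ y ∈ Set.Icc (0:ℝ) 1, f₁ x y ∈ Set.Icc (0:ℝ) 1)
    (hcont0 : ContinuousOn (fun π => f₀ 0 π) (Set.Icc 0 1))
    (hcont1 : ContinuousOn (fun π => f₁ 0 π) (Set.Icc 0 1))
    (g₀' g₁' : ℝ → ℝ)
    (hder0 : ∀ π ∈ Set.Icc (0:ℝ) 1,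
        HasDerivWithinAt (fun p => f₀ 0 p) (g₀' π) (Set.Icc 0 1) π)
    (hder1 : ∀ π ∈ Set.Icc (0:ℝ) 1,
        HasDerivWithinAt (fun p => f₁ 0 p) (g₁' π) (Set.Icc 0 1) π)
    (f : ℝ → ℝ) (hf : ∀ π, f π = π * f₁ 0 π + (1 - π) * f₀ 0 π)
    (f' : ℝ → ℝ)
    (hderf : ∀ π ∈ Set.Icc (0:ℝ) 1, HasDerivWithinAt f (f' π) (Set.Icc 0 1) π)
    (hbound : ∀ π ∈ Set.Icc (0:ℝ) 1, |f' π| ≤ LUN) :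
    (∀ π ∈ Set.Icc (0:ℝ) 1, |f₁ 0 π - f₀ 0 π| < 1) ∧
    (∃ LAA1 : ℝ,
      IsGreatest ((fun π => |f₁ 0 π - f₀ 0 π|) '' Set.Icc (0:ℝ) 1) LAA1 ∧ LAA1 < 1) := by
  have h01 : (0:ℝ) ∈ Set.Icc (0:ℝ) 1 := ⟨le_rfl, zero_le_one⟩
  -- derivative formula
  have hformula : ∀ π ∈ Set.Icc (0:ℝ) 1,
      f' π = 1 * f₁ 0 π + π * g₁' π + ((0 - 1) * f₀ 0 π + (1 - π) * g₀' π) := by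
    intro π hπ
    have hD : HasDerivWithinAt (fun p => p * f₁ 0 p + (1 - p) * f₀ 0 p)
        (1 * f₁ 0 π + π * g₁' π + ((0 - 1) * f₀ 0 π + (1 - π) * g₀' π))
        (Set.Icc 0 1) π :=
      ((hasDerivWithinAt_id π _).mul (hder1 π hπ)).add
        (((hasDerivWithinAt_const π _ 1).sub (hasDerivWithinAt_id π _)).mul (hder0 π hπ))
    have hfe : f = fun p => p * f₁ 0 p + (1 - p) * f₀ 0 p := funext hf
    rw [← hfe] at hD
    have huniq := uniqueDiffOn_Icc (one_pos) π hπ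
    have e1 := (hderf π hπ).derivWithin huniq
    have e2 := hD.derivWithin huniq
    rw [← e1, ← e2]
  have part1 : ∀ π ∈ Set.Icc (0:ℝ) 1, |f₁ 0 π - f₀ 0 π| < 1 := by
    intro π₀ hπ₀
    by_contra hcon
    push_neg at hcon
    have m1 := hmap1 0 h01 π₀ hπ₀
    have m0 := hmap0 0 h01 π₀ hπ₀
    have habs : |f₁ 0 π₀ - f₀ 0 π₀| ≤ 1 := by
      rw [abs_le]; constructor <;> [linarith [m1.1, m0.2]; linarith [m1.2, m0.1]]
    have heq : |f₁ 0 π₀ - f₀ 0 π₀| = 1 := le_antisymm habs hcon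
    have hb := abs_le.mp (hbound π₀ hπ₀)
    have hform := hformula π₀ hπ₀
    rcases (abs_eq zero_le_one).mp heq with hcase | hcase
    · -- f₁ 0 π₀ = 1, f₀ 0 π₀ = 0
      have h1 : f₁ 0 π₀ = 1 := by linarith [m1.2, m0.1]
      have h0 : f₀ 0 π₀ = 0 := by linarith [m1.2, m0.1]
      have t1 : 0 ≤ π₀ * g₁' π₀ := by
        rcases eq_or_lt_of_le hπ₀.1 with h | h
        · rw [← h]; simp
        · have hg : 0 ≤ g₁' π₀ := by
            refine max_right_deriv_nonneg h
              ((hder1 π₀ hπ₀).mono (Set.Icc_subset_Icc le_rfl hπ₀.2)) ?_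
            intro x hx
            rw [h1]
            exact (hmap1 0 h01 x ⟨hx.1, hx.2.trans hπ₀.2⟩).2
          positivity
      have t0 : 0 ≤ (1 - π₀) * g₀' π₀ := by
        rcases eq_or_lt_of_le hπ₀.2 with h | h
        · rw [h]; simp
        · have hg : 0 ≤ g₀' π₀ := by
            refine min_left_deriv_nonneg h
              ((hder0 π₀ hπ₀).mono (Set.Icc_subset_Icc hπ₀.1 le_rfl)) ?_
            intro x hx
            rw [h0]
            exact (hmap0 0 h01 x ⟨hπ₀.1.trans hx.1, hx.2⟩).1
          have : 0 ≤ 1 - π₀ := by linarith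
          positivity
      rw [h1, h0] at hform
      linarith
    · -- f₁ 0 π₀ = 0, f₀ 0 π₀ = 1
      have h1 : f₁ 0 π₀ = 0 := by linarith [m1.1, m0.2]
      have h0 : f₀ 0 π₀ = 1 := by linarith [m1.1, m0.2]
      have t1 : π₀ * g₁' π₀ ≤ 0 := by
        rcases eq_or_lt_of_le hπ₀.1 with h | h
        · rw [← h]; simp
        · have hg : g₁' π₀ ≤ 0 := by
            refine min_right_deriv_nonpos h
              ((hder1 π₀ hπ₀).mono (Set.Icc_subset_Icc le_rfl hπ₀.2)) ?_
            intro x hx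
            rw [h1]
            exact (hmap1 0 h01 x ⟨hx.1, hx.2.trans hπ₀.2⟩).1
          exact mul_nonpos_of_nonneg_of_nonpos h.le hg
      have t0 : (1 - π₀) * g₀' π₀ ≤ 0 := by
        rcases eq_or_lt_of_le hπ₀.2 with h | h
        · rw [h]; simp
        · have hg : g₀' π₀ ≤ 0 := by
            refine max_left_deriv_nonpos h
              ((hder0 π₀ hπ₀).mono (Set.Icc_subset_Icc hπ₀.1 le_rfl)) ?_
            intro x hx
            rw [h0]
            exact (hmap0 0 h01 x ⟨hπ₀.1.trans hx.1, hx.2⟩).2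
          exact mul_nonpos_of_nonneg_of_nonpos (by linarith) hg
      rw [h1, h0] at hform
      linarith
  refine ⟨part1, ?_⟩
  have hcontD : ContinuousOn (fun π => |f₁ 0 π - f₀ 0 π|) (Set.Icc (0:ℝ) 1) :=
    (hcont1.sub hcont0).abs
  have hcomp : IsCompact ((fun π => |f₁ 0 π - f₀ 0 π|) '' Set.Icc (0:ℝ) 1) :=
    (isCompact_Icc).image_of_continuousOn hcontD
  have hne : ((fun π => |f₁ 0 π - f₀ 0 π|) '' Set.Icc (0:ℝ) 1).Nonempty :=
    (Set.nonempty_Icc.mpr zero_le_one).image _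
  obtain ⟨L, hL⟩ := hcomp.exists_isGreatest hne
  refine ⟨L, hL, ?_⟩
  obtain ⟨π₀, hπ₀, hLval⟩ := hL.1
  rw [← hLval]
  exact part1 π₀ hπ₀
end

section
/- Let g_A ∈ (0,1) and u₁ ≥ 0. Let π_A, π_B : [0,∞) → [0,1] be differentiable solutions of the joint AA1 continuous-time dynamics dπ_A/dt = F_A(π_A, π_B) − π_A, dπ_B/dt = F_B(π_A, π_B) − π_B with π_A(0) ≥ π_B(0), where F_A, F_B are the AA1 one-step maps, and suppose π_A(t) ≥ π_B(t) for all t ≥ 0. Then π_B solves the UN continuous-time dynamics dπ/dt = f(π) − π, and the per-time-step utilities satisfy U_t(UN) − U_t(AA1) = g_A·u₁·(π_A(t) − π_B(t)) ≥ 0 for all t ≥ 0, where U_t(UN) = u₁·(g_A·π_A(t) + (1−g_A)·π_B(t)) and U_t(AA1) = u₁·π_B(t). In particular, imposing AA1 never yields more utility than UN at any time. -/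
theorem AA1_no_utility_gain_general
    (f₀ f₁ : ℝ → ℝ → ℝ) (gA u₁ : ℝ)
    (hgA : gA ∈ Set.Ioo (0:ℝ) 1) (hu1 : 0 ≤ u₁)
    (f : ℝ → ℝ) (hf : ∀ π, f π = π * f₁ 0 π + (1 - π) * f₀ 0 π)
    (FB : ℝ → ℝ → ℝ)
    (hFB : ∀ π π', FB π π' = π' * f₁ 0 π' + (1 - π') * f₀ 0 π')
    (πA πB : ℝ → ℝ)
    (hodeB : ∀ t : ℝ, 0 ≤ t →
        HasDerivWithinAt πB (FB (πA t) (πB t) - πB t) (Set.Ici 0) t)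
    (horder : ∀ t : ℝ, 0 ≤ t → πB t ≤ πA t) :
    -- π_B solves the UN continuous-time dynamics
    (∀ t : ℝ, 0 ≤ t → HasDerivWithinAt πB (f (πB t) - πB t) (Set.Ici 0) t) ∧
    -- and UN yields at least as much utility as AA1 at every time
    (∀ t : ℝ, 0 ≤ t →
      u₁ * (gA * πA t + (1 - gA) * πB t) - u₁ * πB t = gA * u₁ * (πA t - πB t) ∧
      0 ≤ gA * u₁ * (πA t - πB t)) := by
  refine ⟨fun t ht => ?_, fun t ht => ⟨by ring, ?_⟩⟩
  · simpa only [hFB, ← hf] using hodeB t ht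
  · exact mul_nonneg (mul_nonneg hgA.1.le hu1) (sub_nonneg.2 (horder t ht))

/-- from Theorem: AA1 never beats UN pointwise in time.
Under the joint AA1 continuous-time dynamics with group A advantaged at all times, the
disadvantaged group `π_B` solves the UN continuous-time dynamics `dπ/dt = f(π) − π`,
and the per-time-step utilities satisfy
`U_t(UN) − U_t(AA1) = g_A·u₁·(π_A(t) − π_B(t)) ≥ 0` for all `t ≥ 0`, where
`U_t(UN) = u₁·(g_A·π_A(t) + (1−g_A)·π_B(t))` and `U_t(AA1) = u₁·π_B(t)`. -/
theorem AA1_no_utility_gain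
    (f₀ f₁ : ℝ → ℝ → ℝ) (gA u₁ : ℝ)
    (hgA : gA ∈ Set.Ioo (0:ℝ) 1) (hu1 : 0 ≤ u₁)
    (f : ℝ → ℝ) (hf : ∀ π, f π = π * f₁ 0 π + (1 - π) * f₀ 0 π)
    (FA FB : ℝ → ℝ → ℝ)
    (hFA : ∀ π π', FA π π' = π * f₁ 0 π' + (1 - π) * f₀ 0 π')
    (hFB : ∀ π π', FB π π' = π' * f₁ 0 π' + (1 - π') * f₀ 0 π')
    (πA πB : ℝ → ℝ)
    (hmemA : ∀ t : ℝ, 0 ≤ t → πA t ∈ Set.Icc (0:ℝ) 1)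
    (hmemB : ∀ t : ℝ, 0 ≤ t → πB t ∈ Set.Icc (0:ℝ) 1)
    (hodeA : ∀ t : ℝ, 0 ≤ t →
        HasDerivWithinAt πA (FA (πA t) (πB t) - πA t) (Set.Ici 0) t)
    (hodeB : ∀ t : ℝ, 0 ≤ t →
        HasDerivWithinAt πB (FB (πA t) (πB t) - πB t) (Set.Ici 0) t)
    (horder : ∀ t : ℝ, 0 ≤ t → πB t ≤ πA t) :
    -- π_B solves the UN continuous-time dynamics
    (∀ t : ℝ, 0 ≤ t → HasDerivWithinAt πB (f (πB t) - πB t) (Set.Ici 0) t) ∧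
    -- and UN yields at least as much utility as AA1 at every time
    (∀ t : ℝ, 0 ≤ t →
      u₁ * (gA * πA t + (1 - gA) * πB t) - u₁ * πB t = gA * u₁ * (πA t - πB t) ∧
      0 ≤ gA * u₁ * (πA t - πB t)) :=
  AA1_no_utility_gain_general f₀ f₁ gA u₁ hgA hu1 f hf FB hFB πA πB hodeB horder
end

section
/- Let g_A ∈ (0,1), u₁ > 0, u₀ < 0. Let a : [0,∞) → [0,1] be the advantaged group's trajectory (identical under UN and AA2), and let b^{UN}, b^{AA2} : [0,∞) → [0,1] be the disadvantaged group's trajectories under UN and AA2 respectively, with common initial gap Δ₀ := a(0) − b^{UN}(0) = a(0) − b^{AA2}(0) ≥ 0. Set Δ^{UN}(t) := a(t) − b^{UN}(t) and Δ^{AA2}(t) := a(t) − b^{AA2}(t), and define the per-step utilities U_t(UN) = u₁·(g_A·a(t) + (1−g_A)·b^{UN}(t)) and U_t(AA2) = g_A·u₁·a(t) + (1−g_A)·(u₁·b^{AA2}(t) + u₀·Δ^{AA2}(t)). Suppose there exist constants c_UN, c_AA2 > 0 such that Δ^{UN}(t) ≥ Δ₀·e^{−c_UN·t} and 0 ≤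 Δ^{AA2}(t) ≤ Δ₀·e^{−c_AA2·t} for all t ≥ 0, and that (u₁ + |u₀|)/c_AA2 ≤ u₁/c_UN. Then the cumulative utility of AA2 over the infinite horizon is at least that of UN: ∫₀^∞ (U_t(UN) − U_t(AA2)) dt ≤ 0. -/
open Filter Set Topology

lemma exp_decay_integral (c : ℝ) (hc : 0 < c) :
    ∫ t in Set.Ioi (0:ℝ), Real.exp (-c * t) = 1 / c := by
  have h := MeasureTheory.integral_Ioi_of_hasDerivAt_of_tendsto'
    (f := fun t : ℝ => -Real.exp (-c * t) / c) (f' := fun t : ℝ => Real.exp (-c * t))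
    (a := (0:ℝ)) (m := 0) ?_ ?_ ?_
  · rw [h]; field_simp; simp
  · intro x _
    have : HasDerivAt (fun t : ℝ => -Real.exp (-c * t) / c)
        (-(Real.exp (-c * x) * (-c * 1)) / c) x :=
      ((((hasDerivAt_id x).const_mul (-c)).exp).neg).div_const c
    convert this using 1
    · rfl
    · rfl
    · rw [eq_div_iff hc.ne']; ring
  · exact (exp_neg_integrableOn_Ioi 0 hc).congr_fun
      (fun x _ => by simp only [neg_mul]) measurableSet_Ioi
  · have : Tendsto (fun t : ℝ => Real.exp (-c * t)) atTop (nhds 0) := by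
      simpa using Real.tendsto_exp_comp_nhds_zero.mpr
        (tendsto_id.const_mul_atTop_of_neg (neg_lt_zero.mpr hc))
    simpa using (this.neg).div_const c

lemma exp_decay_integrable (c : ℝ) (hc : 0 < c) :
    MeasureTheory.IntegrableOn (fun t : ℝ => Real.exp (-c * t)) (Set.Ioi (0:ℝ)) :=
  (exp_neg_integrableOn_Ioi 0 hc).congr_fun (fun x _ => by simp only [neg_mul]) measurableSet_Ioi

/-- from Theorem: AA2 can yield more cumulative utility than UN.
If the UN gap decays no faster than `Δ₀·e^{−c_UN·t}`, the AA2 gap is nonnegative and decays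
at least as fast as `Δ₀·e^{−c_AA2·t}`, and `(u₁ + |u₀|)/c_AA2 ≤ u₁/c_UN`, then the
cumulative (infinite-horizon) utility of AA2 is at least that of UN. -/
theorem AA2_cumulative_utility_gain
    (gA u₁ u₀ Δ₀ cUN cAA2 : ℝ)
    (hgA : gA ∈ Set.Ioo (0:ℝ) 1) (hu1 : 0 < u₁) (hu0 : u₀ < 0)
    (hcUN : 0 < cUN) (hcAA2 : 0 < cAA2)
    (a bUN bAA2 : ℝ → ℝ)
    (hca : Continuous a) (hcbUN : Continuous bUN) (hcbAA2 : Continuous bAA2)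
    (hmem : ∀ t : ℝ, 0 ≤ t →
        a t ∈ Set.Icc (0:ℝ) 1 ∧ bUN t ∈ Set.Icc (0:ℝ) 1 ∧ bAA2 t ∈ Set.Icc (0:ℝ) 1)
    (hΔ₀UN : Δ₀ = a 0 - bUN 0) (hΔ₀AA2 : Δ₀ = a 0 - bAA2 0) (hΔ₀pos : 0 ≤ Δ₀)
    (hlowerUN : ∀ t : ℝ, 0 ≤ t → Δ₀ * Real.exp (-cUN * t) ≤ a t - bUN t)
    (hupperAA2 : ∀ t : ℝ, 0 ≤ t →
        0 ≤ a t - bAA2 t ∧ a t - bAA2 t ≤ Δ₀ * Real.exp (-cAA2 * t))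
    (hcond : (u₁ + |u₀|) / cAA2 ≤ u₁ / cUN) :
    ∫ t in Set.Ici (0:ℝ),
        (u₁ * (gA * a t + (1 - gA) * bUN t)
          - (gA * u₁ * a t + (1 - gA) * (u₁ * bAA2 t + u₀ * (a t - bAA2 t)))) ≤ 0 := by
  set f : ℝ → ℝ := fun t =>
      (u₁ * (gA * a t + (1 - gA) * bUN t)
        - (gA * u₁ * a t + (1 - gA) * (u₁ * bAA2 t + u₀ * (a t - bAA2 t)))) with hf
  set g : ℝ → ℝ := fun t =>
      (1 - gA) * ((u₁ + |u₀|) * (Δ₀ * Real.exp (-cAA2 * t))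
        - u₁ * (Δ₀ * Real.exp (-cUN * t))) with hg
  have hgA1 : 0 ≤ 1 - gA := by linarith [hgA.2]
  -- pointwise bound on Ici 0
  have hfg : ∀ t ∈ Set.Ici (0:ℝ), f t ≤ g t := by
    intro t ht
    have h1 := hlowerUN t ht
    have h2 := (hupperAA2 t ht).1
    have h3 := (hupperAA2 t ht).2
    have habs : |u₀| = -u₀ := abs_of_neg hu0
    have key : f t = (1 - gA) * ((u₁ - u₀) * (a t - bAA2 t) - u₁ * (a t - bUN t)) := by
      simp only [hf]; ring
    rw [key, hg, habs]
    have hA : (u₁ - u₀) * (a t - bAA2 t) ≤ (u₁ + -u₀) * (Δ₀ * Real.exp (-cAA2 * t)) := by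
      have : 0 ≤ u₁ - u₀ := by linarith
      nlinarith
    have hB : u₁ * (Δ₀ * Real.exp (-cUN * t)) ≤ u₁ * (a t - bUN t) :=
      mul_le_mul_of_nonneg_left h1 hu1.le
    exact mul_le_mul_of_nonneg_left (by linarith) hgA1
  -- integrability of g
  have hgint : MeasureTheory.IntegrableOn g (Set.Ioi (0:ℝ)) := by
    apply MeasureTheory.Integrable.const_mul
    exact ((((exp_decay_integrable cAA2 hcAA2).const_mul Δ₀).const_mul (u₁ + |u₀|)).sub
      (((exp_decay_integrable cUN hcUN).const_mul Δ₀).const_mul u₁))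
  -- integral of g
  have hgval : ∫ t in Set.Ioi (0:ℝ), g t
      = (1 - gA) * ((u₁ + |u₀|) * (Δ₀ * (1 / cAA2)) - u₁ * (Δ₀ * (1 / cUN))) := by
    rw [hg]
    rw [MeasureTheory.integral_const_mul]
    rw [MeasureTheory.integral_sub
      ((((exp_decay_integrable cAA2 hcAA2).const_mul Δ₀).const_mul (u₁ + |u₀|)))
      ((((exp_decay_integrable cUN hcUN).const_mul Δ₀).const_mul u₁))]
    rw [MeasureTheory.integral_const_mul, MeasureTheory.integral_const_mul,
      MeasureTheory.integral_const_mul, MeasureTheory.integral_const_mul,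
      exp_decay_integral cAA2 hcAA2, exp_decay_integral cUN hcUN]
  have hgnonpos : ∫ t in Set.Ioi (0:ℝ), g t ≤ 0 := by
    rw [hgval]
    have : (u₁ + |u₀|) * (1 / cAA2) - u₁ * (1 / cUN) ≤ 0 := by
      have h1 : (u₁ + |u₀|) / cAA2 = (u₁ + |u₀|) * (1 / cAA2) := by ring
      have h2 : u₁ / cUN = u₁ * (1 / cUN) := by ring
      linarith [hcond, h1, h2]
    linarith [mul_nonpos_of_nonneg_of_nonpos hgA1
      (mul_nonpos_of_nonneg_of_nonpos hΔ₀pos this)]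
  -- switch Ici to Ioi
  have hIci : ∫ t in Set.Ici (0:ℝ), f t = ∫ t in Set.Ioi (0:ℝ), f t :=
    MeasureTheory.integral_Ici_eq_integral_Ioi
  rw [hIci]
  by_cases hfi : MeasureTheory.IntegrableOn f (Set.Ioi (0:ℝ))
  · calc ∫ t in Set.Ioi (0:ℝ), f t ≤ ∫ t in Set.Ioi (0:ℝ), g t := by
          apply MeasureTheory.setIntegral_mono_on hfi hgint measurableSet_Ioi
          intro x hx; exact hfg x (Set.Ioi_subset_Ici_self hx)
      _ ≤ 0 := hgnonpos
  · rw [MeasureTheory.integral_undef hfi]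
end

section
/- Assume status quo bias: f₁(x,y) ≥ f₀(x,y) for all x, y ∈ [0,1]. If π* ∈ [0,1] satisfies f₁(0,π*) − f₀(0,π*) = 1, then π* is a fixed point of the UN one-step map, f(π*) = π*, and f′(π*) ≥ 1 (with one-sided derivatives at the endpoints 0 and 1). -/
open Filter Set Topology

/-- Under status quo bias (`f₁ ≥ f₀` pointwise on `[0,1]²`), any
`π* ∈ [0,1]` with `f₁(0,π*) − f₀(0,π*) = 1` is a fixed point of the UN one-step map
`f(π) = π·f₁(0,π) + (1−π)·f₀(0,π)` and satisfies `f′(π*) ≥ 1` (derivatives within `[0,1]`,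
i.e. one-sided at the endpoints). -/
theorem status_quo_bias_extreme_gap_is_unstable_fixed_point
    (f₀ f₁ : ℝ → ℝ → ℝ)
    (hmap0 : ∀ x ∈ Set.Icc (0:ℝ) 1, ∀ y ∈ Set.Icc (0:ℝ) 1, f₀ x y ∈ Set.Icc (0:ℝ) 1)
    (hmap1 : ∀ x ∈ Set.Icc (0:ℝ) 1, ∀ y ∈ Set.Icc (0:ℝ) 1, f₁ x y ∈ Set.Icc (0:ℝ) 1)
    (hsqb : ∀ x ∈ Set.Icc (0:ℝ) 1, ∀ y ∈ Set.Icc (0:ℝ) 1, f₀ x y ≤ f₁ x y)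
    (g₀' g₁' : ℝ → ℝ)
    (hder0 : ∀ π ∈ Set.Icc (0:ℝ) 1,
        HasDerivWithinAt (fun p => f₀ 0 p) (g₀' π) (Set.Icc 0 1) π)
    (hder1 : ∀ π ∈ Set.Icc (0:ℝ) 1,
        HasDerivWithinAt (fun p => f₁ 0 p) (g₁' π) (Set.Icc 0 1) π)
    (f : ℝ → ℝ) (hf : ∀ π, f π = π * f₁ 0 π + (1 - π) * f₀ 0 π)
    (πstar : ℝ) (hπs : πstar ∈ Set.Icc (0:ℝ) 1)
    (hgap : f₁ 0 πstar - f₀ 0 πstar = 1) :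
    f πstar = πstar ∧
    ∀ d : ℝ, HasDerivWithinAt f d (Set.Icc 0 1) πstar → 1 ≤ d := by
  have h01 : (0:ℝ) ∈ Set.Icc (0:ℝ) 1 := by constructor <;> norm_num
  -- f₁(0,π*) = 1 and f₀(0,π*) = 0
  have h1s := hmap1 0 h01 πstar hπs
  have h0s := hmap0 0 h01 πstar hπs
  have hf1 : f₁ 0 πstar = 1 := by
    have := h0s.1; have := h1s.2; linarith
  have hf0 : f₀ 0 πstar = 0 := by linarith
  have hfix : f πstar = πstar := by rw [hf, hf1, hf0]; ring
  refine ⟨hfix, ?_⟩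
  intro d hd
  -- πstar is a min of f₀ 0 · and a max of f₁ 0 · on [0,1]
  have hmin : IsLocalMinOn (fun p => f₀ 0 p) (Set.Icc 0 1) πstar := by
    apply IsMinOn.localize
    intro y hy
    simp only [Set.mem_setOf_eq, hf0]
    exact (hmap0 0 h01 y hy).1
  have hmax : IsLocalMaxOn (fun p => f₁ 0 p) (Set.Icc 0 1) πstar := by
    apply IsMaxOn.localize
    intro y hy
    simp only [Set.mem_setOf_eq, hf1]
    exact (hmap1 0 h01 y hy).2
  -- direction lemmas
  have hcone : ∀ y : ℝ, πstar + y ∈ Set.Icc (0:ℝ) 1 →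
      y ∈ posTangentConeAt (Set.Icc (0:ℝ) 1) πstar := by
    intro y hy
    apply mem_posTangentConeAt_of_segment_subset
    exact (convex_Icc (0:ℝ) 1).segment_subset hπs hy
  have key : 0 ≤ πstar * g₁' πstar + (1 - πstar) * g₀' πstar := by
    rcases eq_or_lt_of_le hπs.1 with h0 | h0
    · -- πstar = 0 : need g₀' 0 ≥ 0
      have hy : (1:ℝ) ∈ posTangentConeAt (Set.Icc (0:ℝ) 1) πstar := by
        apply hcone; rw [← h0]; constructor <;> norm_num
      have := hmin.hasFDerivWithinAt_nonneg (hder0 πstar hπs).hasFDerivWithinAt hy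
      simp at this
      rw [← h0] at this ⊢
      simpa using this
    rcases eq_or_lt_of_le hπs.2 with h1 | h1
    · -- πstar = 1 : need g₁' 1 ≥ 0
      have hy : (-1:ℝ) ∈ posTangentConeAt (Set.Icc (0:ℝ) 1) πstar := by
        apply hcone; rw [h1]; constructor <;> norm_num
      have h := hmax.hasFDerivWithinAt_nonpos (hder1 πstar hπs).hasFDerivWithinAt hy
      simp at h
      rw [h1] at h ⊢
      simpa using h
    · -- interior: both derivatives are zero
      have hyp : (1 - πstar) ∈ posTangentConeAt (Set.Icc (0:ℝ) 1) πstar := by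
        apply hcone; constructor <;> [linarith; linarith]
      have hyn : (-πstar) ∈ posTangentConeAt (Set.Icc (0:ℝ) 1) πstar := by
        apply hcone; constructor <;> [linarith; linarith]
      have e0a := hmin.hasFDerivWithinAt_nonneg (hder0 πstar hπs).hasFDerivWithinAt hyp
      have e0b := hmin.hasFDerivWithinAt_nonneg (hder0 πstar hπs).hasFDerivWithinAt hyn
      have e1a := hmax.hasFDerivWithinAt_nonpos (hder1 πstar hπs).hasFDerivWithinAt hyp
      have e1b := hmax.hasFDerivWithinAt_nonpos (hder1 πstar hπs).hasFDerivWithinAt hyn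
      simp at e0a e0b e1a e1b
      linarith [e0a, e1b]
  -- compute the derivative of f within [0,1] at πstar
  have hD : HasDerivWithinAt f
      (1 * f₁ 0 πstar + πstar * g₁' πstar + ((-1) * f₀ 0 πstar + (1 - πstar) * g₀' πstar))
      (Set.Icc 0 1) πstar := by
    have h1 : HasDerivWithinAt (fun p => p * f₁ 0 p)
        (1 * f₁ 0 πstar + πstar * g₁' πstar) (Set.Icc 0 1) πstar :=
      (hasDerivWithinAt_id πstar _).mul (hder1 πstar hπs)
    have h2 : HasDerivWithinAt (fun p => (1 - p) * f₀ 0 p)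
        ((-1) * f₀ 0 πstar + (1 - πstar) * g₀' πstar) (Set.Icc 0 1) πstar := by
      have : HasDerivWithinAt (fun p : ℝ => 1 - p) (-1) (Set.Icc (0:ℝ) 1) πstar := by
        exact (hasDerivWithinAt_id πstar (Set.Icc (0:ℝ) 1)).const_sub (1:ℝ)
      exact this.mul (hder0 πstar hπs)
    have := h1.add h2
    apply this.congr_of_mem
    · intro y _; rw [hf]; rfl
    · exact hπs
  have hud : UniqueDiffWithinAt ℝ (Set.Icc (0:ℝ) 1) πstar :=
    (uniqueDiffOn_Icc zero_lt_one) πstar hπs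
  have heq := hud.eq_deriv _ hd hD
  rw [heq, hf1, hf0]
  linarith
end

section
/- Suppose the UN one-step map f is a k-equilibrium continuous-time dynamics with equilibria π^e_1 < … < π^e_k and delimiters δ_1, …, δ_{k−1}, and suppose L_AA1 := max over π ∈ [0,1] of |f₁(0,π) − f₀(0,π)| satisfies L_AA1 < 1. Let π_A, π_B : [0,∞) → [0,1] be differentiable solutions of the joint AA1 continuous-time dynamics dπ_A/dt = F_A(π_A, π_B) − π_A, dπ_B/dt = F_B(π_A, π_B) − π_B with π_A(0) ≥ π_B(0), π_A(t) ≥ π_B(t) for all t, π_A(0) ∈ (δ_{j−1}, δ_j) and π_B(0) ∈ (δ_{i−1}, δ_i) with i ≤ j. Then π_B(t) → π^e_i and π_A(t) → π^e_i as t → ∞; in particular, for any g_A ∈ (0,1) and u₁ ≥ 0, the limiting per-step utility u₁·π^e_i of the equalized population is no larger than the limiting UN utility u₁·(g_A·π^e_j + (1−g_A)·π^e_i). -/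
/-!
Under AA1 the disadvantaged group's one-step map `F_B(π, π') = f(π')` ignores the advantaged
group, so `π_B` is itself a solution of the unconstrained dynamics and converges to `πe i`.
The gap `g = π_A - π_B ≥ 0` solves the linear equation `g' = (f₁(0, π_B) - f₀(0, π_B) - 1) g`,
whose rate is at most `L_AA1 - 1 < 0`, so Grönwall's inequality makes it decay exponentially and
`π_A` follows `π_B` to `πe i`. The utility comparison is then monotonicity of the equilibria.
-/

open Filter Set Topology

theorem le_mul_exp_of_hasDerivWithinAt_le_mul {g g' : ℝ → ℝ} {K : ℝ}
    (hg : ∀ t, 0 ≤ t → HasDerivWithinAt g (g' t) (Ici 0) t)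
    (hbound : ∀ t, 0 ≤ t → g' t ≤ K * g t) {t : ℝ} (ht : 0 ≤ t) :
    g t ≤ g 0 * Real.exp (K * t) := by
  have h := le_gronwallBound_of_liminf_deriv_right_le (δ := g 0) (ε := 0)
    (fun s hs => (hg s hs.1).continuousWithinAt.mono Icc_subset_Ici_self)
    (fun s hs _ hr => ((hg s hs.1).mono (Ici_subset_Ici.2 hs.1)).liminf_right_slope_le hr)
    le_rfl (fun s hs => by simpa using hbound s hs.1) t ⟨ht, le_rfl⟩
  rwa [gronwallBound_ε0, sub_zero] at h

theorem tendsto_zero_of_hasDerivWithinAt_le_mul {g g' : ℝ → ℝ} {K : ℝ} (hK : K < 0)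
    (hg_nonneg : ∀ t, 0 ≤ t → 0 ≤ g t)
    (hg : ∀ t, 0 ≤ t → HasDerivWithinAt g (g' t) (Ici 0) t)
    (hbound : ∀ t, 0 ≤ t → g' t ≤ K * g t) :
    Tendsto g atTop (𝓝 0) := by
  have hexp : Tendsto (fun t => g 0 * Real.exp (K * t)) atTop (𝓝 0) := by
    simpa using
      (Real.tendsto_exp_atBot.comp (tendsto_id.const_mul_atTop_of_neg hK)).const_mul (g 0)
  refine squeeze_zero' ?_ ?_ hexp
  · filter_upwards [eventually_ge_atTop 0] with t ht using hg_nonneg t ht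
  · filter_upwards [eventually_ge_atTop 0] with t ht
      using le_mul_exp_of_hasDerivWithinAt_le_mul hg hbound ht

theorem strictMonoOn_Iio_of_lt_succ {α : Type*} [Preorder α] {u : ℕ → α} {k : ℕ}
    (hu : ∀ n, n + 1 < k → u n < u (n + 1)) : StrictMonoOn u (Iio k) :=
  strictMonoOn_of_lt_succ ordConnected_Iio fun n _ _ hn => hu n hn

theorem AA1_CT_k_equilibrium_worse_equilibrium_general
    (f₀ f₁ : ℝ → ℝ → ℝ)
    (f : ℝ → ℝ) (hf : ∀ π, f π = π * f₁ 0 π + (1 - π) * f₀ 0 π)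
    (k : ℕ) (πe : ℕ → ℝ) (δ : ℕ → ℝ)
    (hπe_mono : ∀ i, i + 1 < k → πe i < πe (i + 1))
    -- f is a k-equilibrium continuous-time dynamics
    (hkeq : ∀ i < k, ∀ x : ℝ → ℝ,
        (∀ t : ℝ, 0 ≤ t → x t ∈ Set.Icc (0:ℝ) 1) →
        (∀ t : ℝ, 0 ≤ t → HasDerivWithinAt x (f (x t) - x t) (Set.Ici 0) t) →
        ((δ i < x 0 ∧ x 0 < δ (i + 1)) ∨ (i = 0 ∧ x 0 = 0) ∨ (i = k - 1 ∧ x 0 = 1)) →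
        Filter.Tendsto x Filter.atTop (nhds (πe i)))
    -- the AA1 equalizing condition L_AA1 < 1
    (LAA1 : ℝ) (hLAA1 : ∀ π ∈ Set.Icc (0:ℝ) 1, |f₁ 0 π - f₀ 0 π| ≤ LAA1)
    (hLAA1lt : LAA1 < 1)
    -- AA1 one-step maps
    (FA FB : ℝ → ℝ → ℝ)
    (hFA : ∀ π π', FA π π' = π * f₁ 0 π' + (1 - π) * f₀ 0 π')
    (hFB : ∀ π π', FB π π' = π' * f₁ 0 π' + (1 - π') * f₀ 0 π')
    -- joint AA1 continuous-time solutions with A advantaged throughout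
    (πA πB : ℝ → ℝ)
    (hmemB : ∀ t : ℝ, 0 ≤ t → πB t ∈ Set.Icc (0:ℝ) 1)
    (hodeA : ∀ t : ℝ, 0 ≤ t →
        HasDerivWithinAt πA (FA (πA t) (πB t) - πA t) (Set.Ici 0) t)
    (hodeB : ∀ t : ℝ, 0 ≤ t →
        HasDerivWithinAt πB (FB (πA t) (πB t) - πB t) (Set.Ici 0) t)
    (horder : ∀ t : ℝ, 0 ≤ t → πB t ≤ πA t)
    (i j : ℕ) (hij : i ≤ j) (hjk : j < k)
    (hB0 : (δ i < πB 0 ∧ πB 0 < δ (i + 1)) ∨ (i = 0 ∧ πB 0 = 0) ∨ (i = k - 1 ∧ πB 0 = 1)) :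
    Filter.Tendsto πB Filter.atTop (nhds (πe i)) ∧
    Filter.Tendsto πA Filter.atTop (nhds (πe i)) ∧
    ∀ gA u₁ : ℝ, gA ∈ Set.Ioo (0:ℝ) 1 → 0 ≤ u₁ →
      u₁ * πe i ≤ u₁ * (gA * πe j + (1 - gA) * πe i) := by
  have hBtend : Tendsto πB atTop (𝓝 (πe i)) :=
    hkeq i (hij.trans_lt hjk) πB hmemB
      (fun t ht => by simpa only [hFB, ← hf] using hodeB t ht) hB0
  have hgap : Tendsto (fun t => πA t - πB t) atTop (𝓝 0) := by
    refine tendsto_zero_of_hasDerivWithinAt_le_mul (sub_neg.2 hLAA1lt)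
      (fun t ht => sub_nonneg.2 (horder t ht)) (fun t ht => (hodeA t ht).sub (hodeB t ht))
      fun t ht => ?_
    have hrate : f₁ 0 (πB t) - f₀ 0 (πB t) ≤ LAA1 := le_of_abs_le (hLAA1 _ (hmemB t ht))
    calc FA (πA t) (πB t) - πA t - (FB (πA t) (πB t) - πB t)
        = (πA t - πB t) * (f₁ 0 (πB t) - f₀ 0 (πB t) - 1) := by rw [hFA, hFB]; ring
      _ ≤ (πA t - πB t) * (LAA1 - 1) := by gcongr; exact sub_nonneg.2 (horder t ht)
      _ = (LAA1 - 1) * (πA t - πB t) := mul_comm _ _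
  refine ⟨hBtend, by simpa using hBtend.add hgap, fun gA u₁ hgA hu₁ => ?_⟩
  have hπe_le : πe i ≤ πe j :=
    (strictMonoOn_Iio_of_lt_succ hπe_mono).monotoneOn (hij.trans_lt hjk) hjk hij
  have hweighted := mul_le_mul_of_nonneg_left hπe_le hgA.1.le
  exact mul_le_mul_of_nonneg_left (by linarith) hu₁

/-- Theorem: AA1 equalizes to the lower equilibrium in continuous time.
Indexing is 0-based: the UN map `f(π) = π·f₁(0,π) + (1−π)·f₀(0,π)` is a k-equilibrium
continuous-time dynamics with equilibria `πe 0 < … < πe (k−1)` and delimiters `δ 0 = 0`,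
`δ i ∈ (πe (i−1), πe i)`, `δ k = 1`. If `L_AA1 := max_π |f₁(0,π) − f₀(0,π)| < 1`, and
`π_A, π_B` solve the joint AA1 continuous-time dynamics with `π_A` always advantaged,
`π_A(0)` in basin `j` and `π_B(0)` in basin `i`, `i ≤ j`, then both groups converge to
`πe i`; in particular the limiting per-step utility of the equalized population is no
larger than the limiting UN utility. -/
theorem AA1_CT_k_equilibrium_worse_equilibrium
    (f₀ f₁ : ℝ → ℝ → ℝ)
    (hmap0 : ∀ x ∈ Set.Icc (0:ℝ) 1, ∀ y ∈ Set.Icc (0:ℝ) 1, f₀ x y ∈ Set.Icc (0:ℝ) 1)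
    (hmap1 : ∀ x ∈ Set.Icc (0:ℝ) 1, ∀ y ∈ Set.Icc (0:ℝ) 1, f₁ x y ∈ Set.Icc (0:ℝ) 1)
    (f : ℝ → ℝ) (hf : ∀ π, f π = π * f₁ 0 π + (1 - π) * f₀ 0 π)
    (k : ℕ) (hk : 0 < k) (πe : ℕ → ℝ) (δ : ℕ → ℝ)
    (hπe_mem : ∀ i < k, πe i ∈ Set.Icc (0:ℝ) 1)
    (hπe_mono : ∀ i, i + 1 < k → πe i < πe (i + 1))
    (hδ0 : δ 0 = 0) (hδk : δ k = 1)
    (hδ : ∀ i, 0 < i → i < k → πe (i - 1) < δ i ∧ δ i < πe i)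
    -- f is a k-equilibrium continuous-time dynamics
    (hkeq : ∀ i < k, ∀ x : ℝ → ℝ,
        (∀ t : ℝ, 0 ≤ t → x t ∈ Set.Icc (0:ℝ) 1) →
        (∀ t : ℝ, 0 ≤ t → HasDerivWithinAt x (f (x t) - x t) (Set.Ici 0) t) →
        ((δ i < x 0 ∧ x 0 < δ (i + 1)) ∨ (i = 0 ∧ x 0 = 0) ∨ (i = k - 1 ∧ x 0 = 1)) →
        Filter.Tendsto x Filter.atTop (nhds (πe i)))
    -- the AA1 equalizing condition L_AA1 < 1
    (LAA1 : ℝ) (hLAA1 : ∀ π ∈ Set.Icc (0:ℝ) 1, |f₁ 0 π - f₀ 0 π| ≤ LAA1)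
    (hLAA1lt : LAA1 < 1)
    -- AA1 one-step maps
    (FA FB : ℝ → ℝ → ℝ)
    (hFA : ∀ π π', FA π π' = π * f₁ 0 π' + (1 - π) * f₀ 0 π')
    (hFB : ∀ π π', FB π π' = π' * f₁ 0 π' + (1 - π') * f₀ 0 π')
    -- joint AA1 continuous-time solutions with A advantaged throughout
    (πA πB : ℝ → ℝ)
    (hmemA : ∀ t : ℝ, 0 ≤ t → πA t ∈ Set.Icc (0:ℝ) 1)
    (hmemB : ∀ t : ℝ, 0 ≤ t → πB t ∈ Set.Icc (0:ℝ) 1)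
    (hodeA : ∀ t : ℝ, 0 ≤ t →
        HasDerivWithinAt πA (FA (πA t) (πB t) - πA t) (Set.Ici 0) t)
    (hodeB : ∀ t : ℝ, 0 ≤ t →
        HasDerivWithinAt πB (FB (πA t) (πB t) - πB t) (Set.Ici 0) t)
    (horder : ∀ t : ℝ, 0 ≤ t → πB t ≤ πA t)
    (i j : ℕ) (hij : i ≤ j) (hjk : j < k)
    (hA0 : (δ j < πA 0 ∧ πA 0 < δ (j + 1)) ∨ (j = 0 ∧ πA 0 = 0) ∨ (j = k - 1 ∧ πA 0 = 1))
    (hB0 : (δ i < πB 0 ∧ πB 0 < δ (i + 1)) ∨ (i = 0 ∧ πB 0 = 0) ∨ (i = k - 1 ∧ πB 0 = 1)) :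
    Filter.Tendsto πB Filter.atTop (nhds (πe i)) ∧
    Filter.Tendsto πA Filter.atTop (nhds (πe i)) ∧
    ∀ gA u₁ : ℝ, gA ∈ Set.Ioo (0:ℝ) 1 → 0 ≤ u₁ →
      u₁ * πe i ≤ u₁ * (gA * πe j + (1 - gA) * πe i) :=
  AA1_CT_k_equilibrium_worse_equilibrium_general f₀ f₁ f hf k πe δ hπe_mono hkeq LAA1 hLAA1 hLAA1lt
    FA FB hFA hFB πA πB hmemB hodeA hodeB horder i j hij hjk hB0
end
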